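/- arXiv:1407.1334 — 8 statements merged into one kernel-verified Lean document; each statement's English description precedes it below -/
import Mathlib

section
/- Let u be a positive solution of u'' + a(t) u^3 = 0 on [0,τ], where a ∈ L^∞(0,τ), a ≥ 0, a ≢ 0. Let λ1 be the principal eigenvalue of φ'' + λ a(t) φ = 0 with φ ∈ H^1_0(0,τ). Then min_{t ∈ [0,τ]} u(t) ≤ sqrt(λ1). -/
open Set MeasureTheory

/-- A positive solution of `u'' + a u³ = 0` on `[0,τ]` satisfies
`min u ≤ √λ₁`, where `λ₁` is the principal Dirichlet eigenvalue of `φ'' + λ a φ = 0`. -/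
theorem stmt5 (τ : ℝ) (hτ : 0 < τ) (a : ℝ → ℝ) (A : ℝ)
    (ha_nonneg : ∀ t, 0 ≤ a t) (ha_bdd : ∀ t, a t ≤ A)
    (ha_meas : Measurable a) (ha_nontriv : 0 < ∫ t in (0:ℝ)..τ, a t)
    (u : ℝ → ℝ) (hu : ContDiff ℝ 2 u)
    (hu_pos : ∀ t ∈ Icc 0 τ, 0 < u t)
    (hu_eq : ∀ t ∈ Icc 0 τ, deriv (deriv u) t + a t * (u t) ^ 3 = 0)
    (lam1 : ℝ) (hlam1 : 0 < lam1)
    (φ1 : ℝ → ℝ) (hφ1 : ContDiff ℝ 2 φ1)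
    (hφ1_pos : ∀ t ∈ Ioo 0 τ, 0 < φ1 t)
    (hφ1_bc : φ1 0 = 0 ∧ φ1 τ = 0)
    (hφ1_eq : ∀ t ∈ Icc 0 τ, deriv (deriv φ1) t + lam1 * a t * φ1 t = 0) :
    ∃ t ∈ Icc (0:ℝ) τ, u t ≤ Real.sqrt lam1 := by
  by_contra hcon
  push_neg at hcon
  have hsq : ∀ t ∈ Icc (0:ℝ) τ, lam1 < u t ^ 2 := fun t ht =>
    (Real.sqrt_lt' (hu_pos t ht)).mp (hcon t ht)
  -- smoothness facts
  have hu2 : ContDiff ℝ ((1:ℕ∞)+1) u := by norm_num; exact hu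
  have hφ2 : ContDiff ℝ ((1:ℕ∞)+1) φ1 := by norm_num; exact hφ1
  have hud : Differentiable ℝ u := hu.differentiable (by norm_num)
  have hφd : Differentiable ℝ φ1 := hφ1.differentiable (by norm_num)
  have hu1 := (contDiff_succ_iff_deriv.mp hu2).2.2
  have hφ1' := (contDiff_succ_iff_deriv.mp hφ2).2.2
  have hud' : Differentiable ℝ (deriv u) := hu1.differentiable (by norm_num)
  have hφd' : Differentiable ℝ (deriv φ1) := hφ1'.differentiable (by norm_num)
  have hucont : Continuous (deriv (deriv u)) := hu1.continuous_deriv le_rfl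
  have hφcont : Continuous (deriv (deriv φ1)) := hφ1'.continuous_deriv le_rfl
  -- the Wronskian
  set W : ℝ → ℝ := fun t => deriv φ1 t * u t - φ1 t * deriv u t with hWdef
  have hW : ∀ t, HasDerivAt W (deriv (deriv φ1) t * u t - φ1 t * deriv (deriv u) t) t := by
    intro t
    have h1 : HasDerivAt (fun s => deriv φ1 s * u s)
        (deriv (deriv φ1) t * u t + deriv φ1 t * deriv u t) t :=
      ((hφd' t).hasDerivAt).mul ((hud t).hasDerivAt)
    have h2 : HasDerivAt (fun s => φ1 s * deriv u s)
        (deriv φ1 t * deriv u t + φ1 t * deriv (deriv u) t) t :=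
      ((hφd t).hasDerivAt).mul ((hud' t).hasDerivAt)
    have h3 := h1.sub h2
    convert h3 using 1
    · rfl
    · rfl
    · rfl
    · ring
  have hderivW : deriv W = fun t => deriv (deriv φ1) t * u t - φ1 t * deriv (deriv u) t :=
    funext fun t => (hW t).deriv
  have hWc : Continuous (deriv W) := by
    rw [hderivW]
    exact (hφcont.mul hud.continuous).sub (hφd.continuous.mul hucont)
  have hftc : ∫ t in (0:ℝ)..τ, deriv W t = W τ - W 0 :=
    intervalIntegral.integral_deriv_eq_sub (fun x _ => (hW x).differentiableAt)
      (hWc.intervalIntegrable 0 τ)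
  -- nonnegativity of φ1 on Icc
  have hφnn : ∀ t ∈ Icc (0:ℝ) τ, 0 ≤ φ1 t := by
    intro t ht
    rcases eq_or_lt_of_le ht.1 with h0 | h0
    · rw [← h0, hφ1_bc.1]
    rcases eq_or_lt_of_le ht.2 with h1 | h1
    · rw [h1, hφ1_bc.2]
    · exact (hφ1_pos t ⟨h0, h1⟩).le
  -- formula for deriv W on Icc
  have hform : ∀ t ∈ Icc (0:ℝ) τ,
      deriv W t = a t * (φ1 t * u t * (u t ^ 2 - lam1)) := by
    intro t ht
    have e1 := hu_eq t ht
    have e2 := hφ1_eq t ht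
    rw [hderivW]
    simp only
    linear_combination u t * e2 - φ1 t * e1
  have hnn : ∀ t ∈ Icc (0:ℝ) τ, 0 ≤ deriv W t := by
    intro t ht
    rw [hform t ht]
    refine mul_nonneg (ha_nonneg t) (mul_nonneg (mul_nonneg (hφnn t ht) (hu_pos t ht).le) ?_)
    linarith [hsq t ht]
  -- boundary derivative signs
  have hd0 : 0 ≤ deriv φ1 0 := by
    have h := (hφd 0).hasDerivAt
    have hs := hasDerivAt_iff_tendsto_slope.mp h
    have hs' : Filter.Tendsto (slope φ1 0) (nhdsWithin 0 (Ioi 0)) (nhds (deriv φ1 0)) := by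
      refine hs.mono_left (nhdsWithin_mono _ ?_)
      intro x hx
      simp only [mem_compl_iff, mem_singleton_iff]
      exact ne_of_gt hx
    refine ge_of_tendsto hs' ?_
    filter_upwards [Ioo_mem_nhdsGT_of_mem (⟨le_refl 0, hτ⟩ : (0:ℝ) ∈ Ico 0 τ)] with x hx
    have hslope : slope φ1 0 x = φ1 x / x := by
      rw [slope_def_field, hφ1_bc.1, sub_zero, sub_zero]
    rw [hslope]
    exact div_nonneg (hφ1_pos x hx).le hx.1.le
  have hdτ : deriv φ1 τ ≤ 0 := by
    have h := (hφd τ).hasDerivAt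
    have hs := hasDerivAt_iff_tendsto_slope.mp h
    have hs' : Filter.Tendsto (slope φ1 τ) (nhdsWithin τ (Iio τ)) (nhds (deriv φ1 τ)) := by
      refine hs.mono_left (nhdsWithin_mono _ ?_)
      intro x hx
      simp only [mem_compl_iff, mem_singleton_iff]
      exact ne_of_lt hx
    refine le_of_tendsto hs' ?_
    filter_upwards [Ioo_mem_nhdsLT_of_mem (⟨hτ, le_refl τ⟩ : τ ∈ Ioc 0 τ)] with x hx
    have hslope : slope φ1 τ x = φ1 x / (x - τ) := by
      rw [slope_def_field, hφ1_bc.2, sub_zero]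
    rw [hslope]
    exact div_nonpos_of_nonneg_of_nonpos (hφ1_pos x hx).le (by linarith [hx.2])
  -- W τ - W 0 ≤ 0
  have hW0 : 0 ≤ W 0 := by
    have : W 0 = deriv φ1 0 * u 0 := by simp [hWdef, hφ1_bc.1]
    rw [this]
    exact mul_nonneg hd0 (hu_pos 0 ⟨le_refl 0, hτ.le⟩).le
  have hWτ : W τ ≤ 0 := by
    have : W τ = deriv φ1 τ * u τ := by simp [hWdef, hφ1_bc.2]
    rw [this]
    exact mul_nonpos_of_nonpos_of_nonneg hdτ (hu_pos τ ⟨hτ.le, le_refl τ⟩).le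
  -- the integral of deriv W vanishes
  have hint_nonneg : 0 ≤ ∫ t in (0:ℝ)..τ, deriv W t :=
    intervalIntegral.integral_nonneg hτ.le hnn
  have hzero : ∫ t in (0:ℝ)..τ, deriv W t = 0 :=
    le_antisymm (by rw [hftc]; linarith) hint_nonneg
  have hset : ∫ t in Ioc (0:ℝ) τ, deriv W t = 0 := by
    rw [← intervalIntegral.integral_of_le hτ.le]; exact hzero
  have hnn_ae : 0 ≤ᵐ[volume.restrict (Ioc (0:ℝ) τ)] fun t => deriv W t := by
    refine (ae_restrict_iff' measurableSet_Ioc).mpr (ae_of_all _ ?_)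
    intro t ht
    exact hnn t (Ioc_subset_Icc_self ht)
  have hae : (fun t => deriv W t) =ᵐ[volume.restrict (Ioc (0:ℝ) τ)] 0 :=
    (integral_eq_zero_iff_of_nonneg_ae hnn_ae (hWc.integrableOn_Ioc)).mp hset
  -- hence a = 0 a.e. on Ioo
  have haeIoo : ∀ᵐ t ∂(volume.restrict (Ioo (0:ℝ) τ)), a t = 0 := by
    have h1 : ∀ᵐ t ∂(volume.restrict (Ioo (0:ℝ) τ)), deriv W t = 0 :=
      ae_restrict_of_ae_restrict_of_subset Ioo_subset_Ioc_self hae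
    have h2 : ∀ᵐ t ∂(volume.restrict (Ioo (0:ℝ) τ)), t ∈ Ioo (0:ℝ) τ :=
      ae_restrict_mem measurableSet_Ioo
    filter_upwards [h1, h2] with t h10 hmem
    have hIcc : t ∈ Icc (0:ℝ) τ := Ioo_subset_Icc_self hmem
    have hc : 0 < φ1 t * u t * (u t ^ 2 - lam1) := by
      refine mul_pos (mul_pos (hφ1_pos t hmem) (hu_pos t hIcc)) ?_
      linarith [hsq t hIcc]
    have hmul : a t * (φ1 t * u t * (u t ^ 2 - lam1)) = 0 := by
      rw [← hform t hIcc]; exact h10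
    exact (mul_eq_zero.mp hmul).resolve_right (ne_of_gt hc)
  -- conclude
  have hfin : ∫ t in (0:ℝ)..τ, a t = 0 := by
    rw [intervalIntegral.integral_of_le hτ.le,
      ← setIntegral_congr_set Ioo_ae_eq_Ioc]
    exact integral_eq_zero_of_ae haeIoo
  linarith
end

section
/- For every M > 0 there exists M' > 0 such that any solution u of u'' + a(t) u^3 = 0 on [0,τ] with ∫_0^τ (u')^2 ≤ M satisfies ||u||_{L^∞(0,τ)} + ||u'||_{L^∞(0,τ)} ≤ M'. -/
open Set MeasureTheory intervalIntegral

lemma bdd_meas_ii {f : ℝ → ℝ} {b C : ℝ} (hb : 0 ≤ b) (hf : AEStronglyMeasurable f volume)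
    (hbd : ∀ t ∈ Set.Ioc (0:ℝ) b, |f t| ≤ C) : IntervalIntegrable f volume 0 b := by
  rw [intervalIntegrable_iff_integrableOn_Ioc_of_le hb]
  apply Integrable.mono' (g := fun _ => C)
  · exact integrableOn_const measure_Ioc_lt_top.ne
  · exact hf.restrict
  · rw [ae_restrict_iff' measurableSet_Ioc]
    exact Filter.Eventually.of_forall fun t ht => by simpa using hbd t ht

lemma key_est (τ : ℝ) (hτ : 0 < τ) (a : ℝ → ℝ) (A : ℝ)
    (ha_nonneg : ∀ t, 0 ≤ a t) (ha_bdd : ∀ t, a t ≤ A) (ha_meas : Measurable a)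
    (u : ℝ → ℝ) (hu : ContDiff ℝ 2 u)
    (hode : ∀ t ∈ Icc 0 τ, deriv (deriv u) t + a t * (u t) ^ 3 = 0)
    (m S : ℝ) (hm0 : 0 ≤ m) (hmu : ∀ t ∈ Icc 0 τ, m ≤ u t) (hS : ∀ t ∈ Icc 0 τ, |u t| ≤ S) :
    m^3 * (∫ t in (0:ℝ)..τ, a t * (t^2*(τ-t)^2)) ≤ S * (12*τ^2) * τ := by
  set φ : ℝ → ℝ := fun t => t^2*(τ-t)^2 with hφ
  set φ' : ℝ → ℝ := fun t => 2*t*(τ-t)^2 - 2*t^2*(τ-t) with hφ'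
  set φ'' : ℝ → ℝ := fun t => 2*(τ-t)^2 - 8*t*(τ-t) + 2*t^2 with hφ''
  have hφd : ∀ t : ℝ, HasDerivAt φ (φ' t) t := by
    intro t
    have h1 : HasDerivAt (fun t : ℝ => t^2) (2*t) t := by simpa using hasDerivAt_pow 2 t
    have h2 : HasDerivAt (fun t : ℝ => (τ-t)^2) (2*(τ-t)*(-1)) t := by
      simpa using ((hasDerivAt_id t).const_sub τ).fun_pow 2
    have := h1.fun_mul h2
    refine this.congr_deriv ?_; simp only [hφ', id_eq]; ring
  have hφd' : ∀ t : ℝ, HasDerivAt φ' (φ'' t) t := by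
    intro t
    have h0 : HasDerivAt (fun t : ℝ => τ - t) (-1) t := (hasDerivAt_id t).const_sub τ
    have h1 : HasDerivAt (fun t : ℝ => t^2) (2*t) t := by simpa using hasDerivAt_pow 2 t
    have h2 : HasDerivAt (fun t : ℝ => (τ-t)^2) (2*(τ-t)*(-1)) t := by simpa using h0.fun_pow 2
    have ha : HasDerivAt (fun t : ℝ => 2*t*(τ-t)^2) (2*(τ-t)^2 + 2*t*(2*(τ-t)*(-1))) t := by
      have := (((hasDerivAt_id t).const_mul (2:ℝ)).fun_mul h2)
      refine this.congr_deriv ?_; simp only [id_eq]; ring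
    have hb : HasDerivAt (fun t : ℝ => 2*t^2*(τ-t)) (2*(2*t)*(τ-t) + 2*t^2*(-1)) t := by
      have := ((h1.const_mul (2:ℝ)).fun_mul h0)
      convert this using 1
    have := ha.fun_sub hb
    refine this.congr_deriv ?_; simp only [hφ'']; ring
  have hφc : Continuous φ := by fun_prop
  have hφ'c : Continuous φ' := by fun_prop
  have hφ''c : Continuous φ'' := by fun_prop
  have hu2 := hu
  rw [show (2:WithTop ℕ∞) = 1+1 by norm_num, contDiff_succ_iff_deriv] at hu2
  obtain ⟨hud, -, hc⟩ := hu2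
  rw [show (1:WithTop ℕ∞) = 0+1 by norm_num, contDiff_succ_iff_deriv] at hc
  have hud' : Differentiable ℝ (deriv u) := hc.1
  have hu''c : Continuous (deriv (deriv u)) := hc.2.2.continuous
  have huc : Continuous u := hud.continuous
  have hu'c : Continuous (deriv u) := hud'.continuous
  have ibp1 : ∫ x in (0:ℝ)..τ, φ x * deriv (deriv u) x
      = φ τ * deriv u τ - φ 0 * deriv u 0 - ∫ x in (0:ℝ)..τ, φ' x * deriv u x :=
    integral_mul_deriv_eq_deriv_mul (fun x _ => hφd x)
      (fun x _ => (hud' x).hasDerivAt) (hφ'c.intervalIntegrable 0 τ)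
      (hu''c.intervalIntegrable 0 τ)
  have ibp2 : ∫ x in (0:ℝ)..τ, φ' x * deriv u x
      = φ' τ * u τ - φ' 0 * u 0 - ∫ x in (0:ℝ)..τ, φ'' x * u x :=
    integral_mul_deriv_eq_deriv_mul (fun x _ => hφd' x)
      (fun x _ => (hud x).hasDerivAt) (hφ''c.intervalIntegrable 0 τ)
      (hu'c.intervalIntegrable 0 τ)
  have hb1 : φ τ = 0 := by simp [hφ]
  have hb2 : φ 0 = 0 := by simp [hφ]
  have hb3 : φ' τ = 0 := by simp [hφ']
  have hb4 : φ' 0 = 0 := by simp [hφ']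
  have ibp : ∫ x in (0:ℝ)..τ, φ x * deriv (deriv u) x = ∫ x in (0:ℝ)..τ, φ'' x * u x := by
    rw [ibp1, ibp2, hb1, hb2, hb3, hb4]; ring
  have hcongr : ∫ x in (0:ℝ)..τ, φ x * deriv (deriv u) x
      = - ∫ x in (0:ℝ)..τ, a x * (u x)^3 * φ x := by
    rw [← intervalIntegral.integral_neg]
    apply intervalIntegral.integral_congr
    intro t ht
    rw [uIcc_of_le hτ.le] at ht
    have := hode t ht
    have hval : deriv (deriv u) t = -(a t * u t ^ 3) := by linarith
    simp only [hval]; ring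
  have hkey : ∫ x in (0:ℝ)..τ, a x * (u x)^3 * φ x = - ∫ x in (0:ℝ)..τ, φ'' x * u x := by
    have := hcongr.symm.trans ibp
    linarith
  have hS0 : 0 ≤ S := le_trans (abs_nonneg _) (hS 0 ⟨le_refl 0, hτ.le⟩)
  have hφnn : ∀ t : ℝ, 0 ≤ φ t := fun t => by positivity
  have hφbd : ∀ t ∈ Icc (0:ℝ) τ, φ t ≤ τ^4 := by
    intro t ht
    simp only [hφ]
    have e1 : t^2 ≤ τ^2 := by nlinarith [ht.1, ht.2]
    have e2 : (τ-t)^2 ≤ τ^2 := by nlinarith [ht.1, ht.2]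
    calc t^2 * (τ-t)^2 ≤ τ^2 * τ^2 := mul_le_mul e1 e2 (sq_nonneg _) (sq_nonneg τ)
      _ = τ^4 := by ring
  have hA0 : 0 ≤ A := le_trans (ha_nonneg 0) (ha_bdd 0)
  have hii1 : IntervalIntegrable (fun t => m^3 * (a t * φ t)) volume 0 τ := by
    apply bdd_meas_ii hτ.le (C := m^3 * A * τ^4)
    · exact ((ha_meas.mul hφc.measurable).const_mul _).aestronglyMeasurable
    · intro t ht
      have h1 : (0:ℝ) ≤ a t * φ t := mul_nonneg (ha_nonneg t) (hφnn t)
      have h2 : φ t ≤ τ^4 := hφbd t ⟨ht.1.le, ht.2⟩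
      rw [abs_of_nonneg (by positivity)]
      have e1 : a t * φ t ≤ A * τ^4 := mul_le_mul (ha_bdd t) h2 (hφnn t) hA0
      calc m^3 * (a t * φ t) ≤ m^3 * (A * τ^4) :=
            mul_le_mul_of_nonneg_left e1 (pow_nonneg hm0 3)
        _ = m^3 * A * τ^4 := by ring
  have hii2 : IntervalIntegrable (fun t => a t * (u t)^3 * φ t) volume 0 τ := by
    apply bdd_meas_ii hτ.le (C := A * S^3 * τ^4)
    · exact ((ha_meas.mul (huc.pow 3).measurable).mul hφc.measurable).aestronglyMeasurable
    · intro t ht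
      have htI : t ∈ Icc (0:ℝ) τ := ⟨ht.1.le, ht.2⟩
      have h2 : φ t ≤ τ^4 := hφbd t htI
      have h3 : |u t| ≤ S := hS t htI
      have : |a t * u t ^ 3 * φ t| = a t * |u t|^3 * φ t := by
        rw [abs_mul, abs_mul, abs_of_nonneg (ha_nonneg t), abs_of_nonneg (hφnn t), abs_pow]
      rw [this]
      have h4 : |u t|^3 ≤ S^3 := pow_le_pow_left₀ (abs_nonneg _) h3 3
      have e1 : a t * |u t|^3 ≤ A * S^3 :=
        mul_le_mul (ha_bdd t) h4 (pow_nonneg (abs_nonneg _) 3) hA0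
      calc a t * |u t|^3 * φ t ≤ (A * S^3) * τ^4 :=
            mul_le_mul e1 h2 (hφnn t) (by positivity)
        _ = A * S^3 * τ^4 := by ring
  have hlow : m^3 * (∫ t in (0:ℝ)..τ, a t * φ t) ≤ ∫ x in (0:ℝ)..τ, a x * (u x)^3 * φ x := by
    rw [← intervalIntegral.integral_const_mul]
    apply integral_mono_on hτ.le hii1 hii2
    intro x hx
    have h3 : m^3 ≤ (u x)^3 := pow_le_pow_left₀ hm0 (hmu x hx) 3
    nlinarith [mul_nonneg (ha_nonneg x) (hφnn x)]
  have hup : - ∫ x in (0:ℝ)..τ, φ'' x * u x ≤ S * (12*τ^2) * τ := by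
    have hb : ∀ x ∈ Set.uIoc (0:ℝ) τ, ‖φ'' x * u x‖ ≤ 12*τ^2 * S := by
      intro x hx
      rw [uIoc_of_le hτ.le] at hx
      have hxI : x ∈ Icc (0:ℝ) τ := ⟨hx.1.le, hx.2⟩
      have h1 : |φ'' x| ≤ 12*τ^2 := by
        rw [abs_le]
        constructor <;> simp only [hφ''] <;> nlinarith [hxI.1, hxI.2, sq_nonneg x, sq_nonneg (τ - x)]
      have h2 : |u x| ≤ S := hS x hxI
      calc ‖φ'' x * u x‖ = |φ'' x| * |u x| := abs_mul _ _
        _ ≤ 12*τ^2 * S := mul_le_mul h1 h2 (abs_nonneg _) (by positivity)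
    have := intervalIntegral.norm_integral_le_of_norm_le_const hb
    rw [sub_zero, abs_of_nonneg hτ.le] at this
    have habs : |∫ x in (0:ℝ)..τ, φ'' x * u x| ≤ 12*τ^2 * S * τ := this
    have := neg_le_of_abs_le habs
    linarith
  calc m^3 * (∫ t in (0:ℝ)..τ, a t * φ t) ≤ ∫ x in (0:ℝ)..τ, a x * (u x)^3 * φ x := hlow
    _ = - ∫ x in (0:ℝ)..τ, φ'' x * u x := hkey
    _ ≤ S * (12*τ^2) * τ := hup

lemma K_pos (τ : ℝ) (hτ : 0 < τ) (a : ℝ → ℝ) (A : ℝ) (ha_nonneg : ∀ t, 0 ≤ a t)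
    (ha_bdd : ∀ t, a t ≤ A) (ha_meas : Measurable a)
    (ha_nontriv : 0 < ∫ t in (0:ℝ)..τ, a t) :
    0 < ∫ t in (0:ℝ)..τ, a t * (t^2*(τ-t)^2) := by
  have hA0 : 0 ≤ A := le_trans (ha_nonneg 0) (ha_bdd 0)
  have hφc : Continuous (fun t : ℝ => t^2*(τ-t)^2) := by fun_prop
  have hnn : ∀ t : ℝ, 0 ≤ a t * (t^2*(τ-t)^2) := fun t =>
    mul_nonneg (ha_nonneg t) (by positivity)
  have hii : IntervalIntegrable (fun t => a t * (t^2*(τ-t)^2)) volume 0 τ := by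
    apply bdd_meas_ii hτ.le (C := A * (τ^4 + 1))
    · exact (ha_meas.mul hφc.measurable).aestronglyMeasurable
    · intro t ht
      have e1 : t^2 ≤ τ^2 := by nlinarith [ht.1, ht.2]
      have e2 : (τ-t)^2 ≤ τ^2 := by nlinarith [ht.1.le, ht.2]
      have e3 : t^2*(τ-t)^2 ≤ τ^4 := by
        calc t^2 * (τ-t)^2 ≤ τ^2 * τ^2 := mul_le_mul e1 e2 (sq_nonneg _) (sq_nonneg τ)
          _ = τ^4 := by ring
      rw [abs_of_nonneg (hnn t)]
      have := mul_le_mul (ha_bdd t) e3 (mul_nonneg (sq_nonneg t) (sq_nonneg _)) hA0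
      nlinarith [this]
  have h0 : 0 ≤ ∫ t in (0:ℝ)..τ, a t * (t^2*(τ-t)^2) :=
    intervalIntegral.integral_nonneg hτ.le (fun t _ => hnn t)
  rcases h0.lt_or_eq with h | h
  · exact h
  exfalso
  have h' : ∫ t in Ioc (0:ℝ) τ, a t * (t^2*(τ-t)^2) = 0 := by
    rw [← intervalIntegral.integral_of_le hτ.le]; exact h.symm
  have hzero : (fun t => a t * (t^2*(τ-t)^2)) =ᵐ[volume.restrict (Ioc 0 τ)] 0 :=
    (integral_eq_zero_iff_of_nonneg hnn
      ((intervalIntegrable_iff_integrableOn_Ioc_of_le hτ.le).1 hii)).1 h'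
  have hz2 : ∀ᵐ t ∂volume, t ∈ Ioc (0:ℝ) τ → a t * (t^2*(τ-t)^2) = 0 :=
    (ae_restrict_iff' measurableSet_Ioc).1 hzero
  have hne : ∀ᵐ (t : ℝ) ∂volume, t ≠ τ := by
    rw [ae_iff]
    have hset : {t : ℝ | ¬ t ≠ τ} = {τ} := by ext t; simp
    rw [hset]
    exact Real.volume_singleton
  have haz : a =ᵐ[volume.restrict (Ioc 0 τ)] 0 := by
    rw [Filter.EventuallyEq, ae_restrict_iff' measurableSet_Ioc]
    filter_upwards [hz2, hne] with t h1 h2 h3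
    have h4 := h1 h3
    have ht1 : 0 < t := h3.1
    have ht2 : t < τ := lt_of_le_of_ne h3.2 h2
    have hφpos : 0 < t^2*(τ-t)^2 := mul_pos (pow_pos ht1 2) (pow_pos (by linarith) 2)
    rcases mul_eq_zero.1 h4 with h5 | h5
    · exact h5
    · exact absurd h5 (ne_of_gt hφpos)
  have : ∫ t in (0:ℝ)..τ, a t = 0 := by
    rw [intervalIntegral.integral_of_le hτ.le]
    exact integral_eq_zero_of_ae haz
  linarith

set_option maxHeartbeats 2000000 in
/-- A priori `C¹` bound: for every `M > 0` there is `M' > 0` such that any solution of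
`u'' + a u³ = 0` on `[0,τ]` with `∫₀^τ u'² ≤ M` satisfies `‖u‖_∞ + ‖u'‖_∞ ≤ M'`. -/
theorem stmt6 (τ : ℝ) (hτ : 0 < τ) (a : ℝ → ℝ) (A : ℝ)
    (ha_nonneg : ∀ t, 0 ≤ a t) (ha_bdd : ∀ t, a t ≤ A)
    (ha_meas : Measurable a) (ha_nontriv : 0 < ∫ t in (0:ℝ)..τ, a t)
    (M : ℝ) (hM : 0 < M) :
    ∃ M' > 0, ∀ u : ℝ → ℝ, ContDiff ℝ 2 u →
      (∀ t ∈ Icc 0 τ, deriv (deriv u) t + a t * (u t) ^ 3 = 0) →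
      (∫ t in (0:ℝ)..τ, (deriv u t) ^ 2) ≤ M →
      ∀ t ∈ Icc 0 τ, |u t| + |deriv u t| ≤ M' := by
  have hA0 : 0 ≤ A := le_trans (ha_nonneg 0) (ha_bdd 0)
  obtain ⟨K, hKdef⟩ : ∃ x : ℝ, x = ∫ t in (0:ℝ)..τ, a t * (t^2*(τ-t)^2) := ⟨_, rfl⟩
  have hK : 0 < K := hKdef ▸ K_pos τ hτ a A ha_nonneg ha_bdd ha_meas ha_nontriv
  obtain ⟨D, hDdef⟩ : ∃ x : ℝ, x = (τ + M)/2 := ⟨_, rfl⟩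
  have hD0 : 0 ≤ D := by rw [hDdef]; positivity
  obtain ⟨C₀, hC₀def⟩ : ∃ x : ℝ, x = max 1 ((12*τ^2*τ)*(1+D)/K) := ⟨_, rfl⟩
  have hC₀1 : (1:ℝ) ≤ C₀ := hC₀def ▸ le_max_left _ _
  obtain ⟨B, hBdef⟩ : ∃ x : ℝ, x = C₀ + D := ⟨_, rfl⟩
  have hB0 : (1:ℝ) ≤ B := by rw [hBdef]; linarith
  obtain ⟨c₁, hc₁def⟩ : ∃ x : ℝ, x = max 1 (M/τ) := ⟨_, rfl⟩
  have hc₁1 : (1:ℝ) ≤ c₁ := hc₁def ▸ le_max_left _ _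
  have hMnn : 0 ≤ τ*A*B^3 :=
    mul_nonneg (mul_nonneg hτ.le hA0) (pow_nonneg (by linarith : (0:ℝ) ≤ B) 3)
  refine ⟨B + c₁ + τ*A*B^3, by linarith, ?_⟩
  intro u hu hode hint t htI
  -- regularity
  have hu2 := hu
  rw [show (2:WithTop ℕ∞) = 1+1 by norm_num, contDiff_succ_iff_deriv] at hu2
  obtain ⟨hud, -, hc⟩ := hu2
  rw [show (1:WithTop ℕ∞) = 0+1 by norm_num, contDiff_succ_iff_deriv] at hc
  have hud' : Differentiable ℝ (deriv u) := hc.1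
  have hu''c : Continuous (deriv (deriv u)) := hc.2.2.continuous
  have huc : Continuous u := hud.continuous
  have hu'c : Continuous (deriv u) := hud'.continuous
  -- oscillation bound: ∫ |u'| ≤ D
  have hE : ∫ x in (0:ℝ)..τ, |deriv u x| ≤ D := by
    have h1 : ∫ x in (0:ℝ)..τ, |deriv u x| ≤ ∫ x in (0:ℝ)..τ, (1 + (deriv u x)^2)/2 := by
      apply integral_mono_on hτ.le (hu'c.abs.intervalIntegrable 0 τ)
        (((continuous_const.add (hu'c.pow 2)).div_const 2).intervalIntegrable 0 τ)
      intro x _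
      show |deriv u x| ≤ (1 + (deriv u x)^2)/2
      nlinarith [sq_nonneg (|deriv u x| - 1), sq_abs (deriv u x)]
    have h2 : ∫ x in (0:ℝ)..τ, (1 + (deriv u x)^2)/2
        = (τ + ∫ x in (0:ℝ)..τ, (deriv u x)^2)/2 := by
      rw [intervalIntegral.integral_div, intervalIntegral.integral_add
        (intervalIntegrable_const) (show IntervalIntegrable (fun x => deriv u x ^ 2) volume 0 τ from (hu'c.pow 2).intervalIntegrable 0 τ)]
      simp
    rw [h2] at h1
    rw [hDdef]
    linarith
  have hosc : ∀ s ∈ Icc (0:ℝ) τ, ∀ r ∈ Icc (0:ℝ) τ, |u r - u s| ≤ D := by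
    have base : ∀ s ∈ Icc (0:ℝ) τ, ∀ r ∈ Icc (0:ℝ) τ, s ≤ r → |u r - u s| ≤ D := by
      intro s hs r hr hsr
      have hftc : ∫ x in s..r, deriv u x = u r - u s :=
        integral_deriv_eq_sub (fun x _ => hud x) (hu'c.intervalIntegrable s r)
      rw [← hftc]
      calc |∫ x in s..r, deriv u x| ≤ ∫ x in s..r, |deriv u x| :=
            intervalIntegral.abs_integral_le_integral_abs hsr
        _ ≤ ∫ x in (0:ℝ)..τ, |deriv u x| := by
            apply intervalIntegral.integral_mono_interval hs.1 hsr hr.2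
            · exact Filter.Eventually.of_forall fun x => abs_nonneg _
            · exact hu'c.abs.intervalIntegrable 0 τ
        _ ≤ D := hE
    intro s hs r hr
    rcases le_total s r with h | h
    · exact base s hs r hr h
    · rw [abs_sub_comm]; exact base r hr s hs h
  -- minimum of |u|
  obtain ⟨s, hsI, hsmin⟩ := isCompact_Icc.exists_isMinOn (nonempty_Icc.2 hτ.le)
    (huc.abs.continuousOn)
  set m : ℝ := |u s| with hmdef
  have hm0 : 0 ≤ m := abs_nonneg _
  have hmin : ∀ r ∈ Icc (0:ℝ) τ, m ≤ |u r| := fun r hr => hsmin hr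
  have hSb : ∀ r ∈ Icc (0:ℝ) τ, |u r| ≤ m + D := by
    intro r hr
    have := hosc s hsI r hr
    have h2 := abs_sub_abs_le_abs_sub (u r) (u s)
    linarith
  -- m ≤ C₀
  have hmC : m ≤ C₀ := by
    by_contra hgt
    push_neg at hgt
    have hm1 : (1:ℝ) < m := lt_of_le_of_lt hC₀1 hgt
    have hmpos : 0 < m := by linarith
    have haux : ∀ v : ℝ → ℝ, ContDiff ℝ 2 v →
        (∀ r ∈ Icc 0 τ, deriv (deriv v) r + a r * (v r) ^ 3 = 0) →
        (∀ r ∈ Icc (0:ℝ) τ, m ≤ v r) → (∀ r ∈ Icc (0:ℝ) τ, |v r| ≤ m + D) → False := by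
      intro v hv hodev hmv hSv
      have hke := key_est τ hτ a A ha_nonneg ha_bdd ha_meas v hv hodev m (m+D)
        hm0 hmv hSv
      have h12 : (12*τ^2*τ)*(1+D) ≤ C₀*K := by
        rw [hC₀def]
        have := le_max_right (1:ℝ) ((12*τ^2*τ)*(1+D)/K)
        calc (12*τ^2*τ)*(1+D) = ((12*τ^2*τ)*(1+D)/K)*K := by field_simp
          _ ≤ max 1 ((12*τ^2*τ)*(1+D)/K) * K := by
              apply mul_le_mul_of_nonneg_right this hK.le
      rw [← hKdef] at hke
      have hτ3 : (0:ℝ) < 12*τ^2*τ := by positivity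
      have e2 : 12*τ^2*τ*(m+D) ≤ 12*τ^2*τ*(m*(1+D)) := by
        apply mul_le_mul_of_nonneg_left _ hτ3.le
        nlinarith
      have e4 : m*(12*τ^2*τ*(1+D)) ≤ m*(C₀*K) := mul_le_mul_of_nonneg_left h12 (by linarith)
      have e5 : m*(C₀*K) < m*(m*K) :=
        mul_lt_mul_of_pos_left (mul_lt_mul_of_pos_right hgt hK) hmpos
      have e6 : m*(m*K) ≤ m*(m*(m*K)) := by
        nlinarith [mul_pos (mul_pos hmpos hmpos) hK, hm1, mul_pos hmpos hK]
      nlinarith [hke, e2, e4, e5, e6]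
    have hne0 : u s ≠ 0 := by
      intro h0
      rw [hmdef, h0] at hmpos; simp at hmpos
    rcases hne0.lt_or_gt with hneg | hpos
    · -- u s < 0 : u < 0 everywhere, use v = -u
      have hval : ∀ r ∈ Icc (0:ℝ) τ, u r < 0 := by
        intro r hr
        by_contra hle
        push_neg at hle
        have h0mem : (0:ℝ) ∈ uIcc (u s) (u r) := by
          rw [Set.mem_uIcc]; left; exact ⟨hneg.le, hle⟩
        obtain ⟨c, hc1, hc2⟩ := intermediate_value_uIcc (huc.continuousOn.mono
          (Set.uIcc_subset_Icc hsI hr)) h0mem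
        have hcI : c ∈ Icc (0:ℝ) τ := Set.uIcc_subset_Icc hsI hr hc1
        have := hmin c hcI
        rw [hc2] at this
        simp at this
        linarith
      have hdv : deriv (fun r => -u r) = fun r => -deriv u r := by
        funext r; exact deriv.neg
      apply haux (fun r => -u r) hu.neg
      · intro r hr
        have h1 := hode r hr
        have : deriv (deriv fun r => -u r) r = -(deriv (deriv u) r) := by
          rw [hdv]; exact deriv.neg
        rw [this]; ring_nf; ring_nf at h1; linarith
      · intro r hr
        have h1 := hmin r hr
        rw [abs_of_neg (hval r hr)] at h1
        simpa using h1
      · intro r hr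
        have := hSb r hr
        rwa [abs_neg]
    · -- u s > 0
      have hval : ∀ r ∈ Icc (0:ℝ) τ, 0 < u r := by
        intro r hr
        by_contra hle
        push_neg at hle
        have h0mem : (0:ℝ) ∈ uIcc (u s) (u r) := by
          rw [Set.mem_uIcc]; right; exact ⟨hle, hpos.le⟩
        obtain ⟨c, hc1, hc2⟩ := intermediate_value_uIcc (huc.continuousOn.mono
          (Set.uIcc_subset_Icc hsI hr)) h0mem
        have hcI : c ∈ Icc (0:ℝ) τ := Set.uIcc_subset_Icc hsI hr hc1
        have := hmin c hcI
        rw [hc2] at this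
        simp at this
        linarith
      apply haux u hu hode
      · intro r hr
        have h1 := hmin r hr
        rwa [abs_of_pos (hval r hr)] at h1
      · exact hSb
  -- global bound on |u|
  have hB : ∀ r ∈ Icc (0:ℝ) τ, |u r| ≤ B := by
    intro r hr
    have := hSb r hr
    rw [hBdef]
    linarith [hmC]
  -- bound on |u'| at a minimum point of (u')²
  obtain ⟨p, hpI, hpmin⟩ := isCompact_Icc.exists_isMinOn (nonempty_Icc.2 hτ.le)
    ((hu'c.pow 2).continuousOn)
  have hp2 : (deriv u p)^2 * τ ≤ M := by
    have h1 : ∫ x in (0:ℝ)..τ, (deriv u p)^2 ≤ ∫ x in (0:ℝ)..τ, (deriv u x)^2 :=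
      integral_mono_on hτ.le intervalIntegrable_const ((hu'c.pow 2).intervalIntegrable 0 τ)
        (fun x hx => hpmin hx)
    rw [intervalIntegral.integral_const, smul_eq_mul, sub_zero] at h1
    nlinarith [h1, hint]
  have hpb : |deriv u p| ≤ c₁ := by
    rcases le_total (|deriv u p|) 1 with h | h
    · exact le_trans h hc₁1
    · have h2 : |deriv u p| ≤ |deriv u p|^2 := by nlinarith
      have h3 : |deriv u p|^2 = (deriv u p)^2 := sq_abs _
      have h4 : (deriv u p)^2 ≤ M/τ := by
        rw [le_div_iff₀ hτ]; linarith [hp2]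
      calc |deriv u p| ≤ (deriv u p)^2 := by rw [← h3]; exact h2
        _ ≤ M/τ := h4
        _ ≤ c₁ := hc₁def ▸ le_max_right _ _
  -- bound on |u'| everywhere
  have hu'b : |deriv u t| ≤ c₁ + τ*A*B^3 := by
    have hftc : ∫ x in p..t, deriv (deriv u) x = deriv u t - deriv u p :=
      integral_deriv_eq_sub (fun x _ => hud' x) (hu''c.intervalIntegrable p t)
    have hbd : ∀ x ∈ Set.uIoc p t, ‖deriv (deriv u) x‖ ≤ A*B^3 := by
      intro x hx
      have hxI : x ∈ Icc (0:ℝ) τ := by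
        have : Set.uIoc p t ⊆ Icc (0:ℝ) τ := Set.Ioc_subset_Icc_self.trans
          ((Set.uIcc_subset_Icc hpI htI))
        exact this hx
      have h1 := hode x hxI
      have hval : deriv (deriv u) x = -(a x * u x ^ 3) := by linarith
      rw [hval, Real.norm_eq_abs, abs_neg, abs_mul, abs_of_nonneg (ha_nonneg x), abs_pow]
      have h2 : |u x|^3 ≤ B^3 := pow_le_pow_left₀ (abs_nonneg _) (hB x hxI) 3
      exact mul_le_mul (ha_bdd x) h2 (pow_nonneg (abs_nonneg _) 3) hA0
    have h5 := intervalIntegral.norm_integral_le_of_norm_le_const hbd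
    rw [hftc, Real.norm_eq_abs] at h5
    have h6 : |t - p| ≤ τ := by
      rw [abs_le]
      constructor <;> [linarith [htI.1, hpI.2]; linarith [htI.2, hpI.1]]
    have h7 : |deriv u t - deriv u p| ≤ A*B^3*τ := by
      calc |deriv u t - deriv u p| ≤ A*B^3 * |t - p| := h5
        _ ≤ A*B^3*τ := by
            apply mul_le_mul_of_nonneg_left h6 (by positivity)
    have h8 := abs_sub_abs_le_abs_sub (deriv u t) (deriv u p)
    nlinarith [hpb, h7, h8]
  have := hB t htI
  nlinarith [hu'b, this]
end

section
/- Let u be a nontrivial solution of u'' + a(t) u^3 = 0 on [0,τ] with ∫_0^τ (u')^2 ≤ E, and let ζ > 0 satisfy ||a||_{L^∞} · E · ζ^3 < 1. Then u cannot have two distinct zeros in any subinterval of [0,τ] of length at most ζ; in particular u has at most one zero in [0,ζ] and at most one zero in [τ−ζ, τ]. -/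
open Set MeasureTheory intervalIntegral

lemma stmt7_key (a v : ℝ → ℝ) (A E ζ t1 c t2 : ℝ)
    (ha0 : ∀ t, 0 ≤ a t) (haA : ∀ t, a t ≤ A)
    (hζ0 : 0 < ζ) (hlen : t2 - t1 ≤ ζ)
    (hv : ContDiff ℝ 2 v)
    (hode : ∀ t ∈ Icc t1 t2, deriv (deriv v) t = -(a t * v t ^ 3))
    (hc : c ∈ Ioo t1 t2)
    (hmax : ∀ t ∈ Icc t1 t2, |v t| ≤ v c)
    (hz1 : v t1 = 0) (hz2 : v t2 = 0)
    (hM : 0 < v c)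
    (henergy : (∫ t in t1..c, (deriv v t) ^ 2) ≤ E) :
    1 ≤ A * E * ζ ^ 3 := by
  set M := v c with hMdef
  have hA : 0 ≤ A := le_trans (ha0 t1) (haA t1)
  have hcd : Differentiable ℝ v := hv.differentiable (by norm_num)
  have hv' : ContDiff ℝ (1 + 1) v := by
    have h21 : (2 : WithTop ℕ∞) = 1 + 1 := by norm_num
    rwa [h21] at hv
  have hcd1 : ContDiff ℝ 1 (deriv v) := (contDiff_succ_iff_deriv.mp hv').2.2
  have hdv : Differentiable ℝ (deriv v) := hcd1.differentiable one_ne_zero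
  have hcdd : Continuous (deriv (deriv v)) := (contDiff_one_iff_deriv.mp hcd1).2
  have hcv : Continuous v := hcd.continuous
  have hcdv : Continuous (deriv v) := hdv.continuous
  -- deriv v c = 0
  have hderiv0 : deriv v c = 0 := by
    apply IsLocalMax.deriv_eq_zero
    have hmem : Ioo t1 t2 ∈ nhds c := Ioo_mem_nhds hc.1 hc.2
    exact Filter.eventually_of_mem hmem fun t ht =>
      (le_abs_self _).trans (hmax t (Ioo_subset_Icc_self ht))
  -- pointwise derivative bound
  have hdb : ∀ t ∈ Icc t1 t2, |deriv v t| ≤ A * M ^ 3 * |t - c| := by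
    intro t ht
    have hftc : (∫ s in c..t, deriv (deriv v) s) = deriv v t - deriv v c :=
      integral_deriv_eq_sub (fun x _ => hdv x) (hcdd.intervalIntegrable _ _)
    have hsub : uIcc c t ⊆ Icc t1 t2 :=
      uIcc_subset_Icc (Ioo_subset_Icc_self hc) ht
    have : |deriv v t| = |∫ s in c..t, deriv (deriv v) s| := by
      rw [hftc, hderiv0, sub_zero]
    rw [this]
    have := intervalIntegral.norm_integral_le_of_norm_le_const
      (C := A * M ^ 3) (f := fun s => deriv (deriv v) s) (a := c) (b := t) ?_
    · simpa [abs_sub_comm t c] using this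
    · intro x hx
      have hxm : x ∈ Icc t1 t2 := hsub (uIoc_subset_uIcc hx)
      show ‖deriv (deriv v) x‖ ≤ A * M ^ 3
      rw [hode x hxm]
      have h1 : |v x| ≤ M := hmax x hxm
      have h2 : |v x ^ 3| ≤ M ^ 3 := by
        rw [abs_pow]
        exact pow_le_pow_left₀ (abs_nonneg _) h1 3
      have h3 : |a x| ≤ A := by rw [abs_of_nonneg (ha0 x)]; exact haA x
      calc ‖-(a x * v x ^ 3)‖ = |a x| * |v x ^ 3| := by
            rw [Real.norm_eq_abs, abs_neg, abs_mul]
        _ ≤ A * M ^ 3 := by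
            apply mul_le_mul h3 h2 (abs_nonneg _) hA
  -- M ≤ A M³ L² on each side
  have hside : ∀ p L : ℝ, p ∈ Icc t1 t2 → v p = 0 → (∀ t, t ∈ uIcc p c → |t - c| ≤ L) →
      M ≤ A * M ^ 3 * L * |c - p| := by
    intro p L hp hvp hL
    have hftc : (∫ s in p..c, deriv v s) = v c - v p :=
      integral_deriv_eq_sub (fun x _ => hcd x) (hcdv.intervalIntegrable _ _)
    have hMeq : M = ‖∫ s in p..c, deriv v s‖ := by
      rw [Real.norm_eq_abs, hftc, hvp, sub_zero, abs_of_pos hM]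
    calc M = ‖∫ s in p..c, deriv v s‖ := hMeq
      _ ≤ A * M ^ 3 * L * |c - p| := by
        apply intervalIntegral.norm_integral_le_of_norm_le_const
        intro x hx
        have hxu : x ∈ uIcc p c := uIoc_subset_uIcc hx
        have hxm : x ∈ Icc t1 t2 := (uIcc_subset_Icc hp (Ioo_subset_Icc_self hc)) hxu
        calc ‖deriv v x‖ ≤ A * M ^ 3 * |x - c| := hdb x hxm
          _ ≤ A * M ^ 3 * L := by
              apply mul_le_mul_of_nonneg_left (hL x hxu)
              positivity
  have hMpow : 0 < M ^ 3 := by positivity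
  have hleft : M ≤ A * M ^ 3 * (c - t1) * (c - t1) := by
    have := hside t1 (c - t1) (left_mem_Icc.mpr (le_of_lt (hc.1.trans hc.2))) hz1 ?_
    · calc M ≤ A * M ^ 3 * (c - t1) * |c - t1| := this
        _ = A * M ^ 3 * (c - t1) * (c - t1) := by
            rw [abs_of_nonneg (by linarith [hc.1] : (0:ℝ) ≤ c - t1)]
    · intro t ht
      rw [uIcc_of_le hc.1.le] at ht
      rw [abs_of_nonpos (by linarith [ht.2])]
      linarith [ht.1]
  have hright : M ≤ A * M ^ 3 * (t2 - c) * (t2 - c) := by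
    have := hside t2 (t2 - c) (right_mem_Icc.mpr (le_of_lt (hc.1.trans hc.2))) hz2 ?_
    · calc M ≤ A * M ^ 3 * (t2 - c) * |c - t2| := this
        _ = A * M ^ 3 * (t2 - c) * (t2 - c) := by
            rw [abs_sub_comm, abs_of_nonneg (by linarith [hc.2] : (0:ℝ) ≤ t2 - c)]
    · intro t ht
      rw [uIcc_of_ge hc.2.le] at ht
      rw [abs_of_nonneg (by linarith [ht.1])]
      linarith [ht.2]
  -- energy bound : M² ≤ 4 ζ E
  have hEbound : M ^ 2 ≤ 4 * ζ * E := by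
    have hcont2 : Continuous fun t => 2 * v t * deriv v t :=
      (continuous_const.mul hcv).mul hcdv
    have hderiveq : (deriv fun t => v t ^ 2) = fun t => 2 * v t * deriv v t := by
      funext t
      have hda : HasDerivAt (fun s => v s ^ 2) (2 * v t * deriv v t) t := by
        have h := ((hcd t).hasDerivAt).fun_pow 2
        simpa [mul_comm] using h
      exact hda.deriv
    have hftc : (∫ s in t1..c, deriv (fun t => v t ^ 2) s) = v c ^ 2 - v t1 ^ 2 :=
      integral_deriv_eq_sub (fun x _ => (hcd x).pow 2)
        (by rw [hderiveq]; exact hcont2.intervalIntegrable _ _)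
    rw [hderiveq, hz1] at hftc
    have hM2 : M ^ 2 = ∫ s in t1..c, 2 * v s * deriv v s := by
      rw [hftc]; ring
    have hmono : (∫ s in t1..c, 2 * v s * deriv v s) ≤
        ∫ s in t1..c, (M ^ 2 / (2 * ζ) + 2 * ζ * (deriv v s) ^ 2) := by
      apply intervalIntegral.integral_mono_on hc.1.le
      · exact hcont2.intervalIntegrable _ _
      · exact (continuous_const.add (continuous_const.mul (hcdv.pow 2))).intervalIntegrable _ _
      · intro x hx
        have hxm : x ∈ Icc t1 t2 := Icc_subset_Icc le_rfl hc.2.le hx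
        have hx2 : (v x) ^ 2 ≤ M ^ 2 := by
          have := hmax x hxm
          calc (v x) ^ 2 = |v x| ^ 2 := (sq_abs _).symm
            _ ≤ M ^ 2 := by apply pow_le_pow_left₀ (abs_nonneg _) this
        rw [div_add' _ _ _ (by positivity : (2*ζ) ≠ 0), le_div_iff₀ (by positivity)]
        nlinarith [sq_nonneg (v x - 2 * ζ * deriv v x)]
    have hsplit : (∫ s in t1..c, (M ^ 2 / (2 * ζ) + 2 * ζ * (deriv v s) ^ 2)) =
        (c - t1) * (M ^ 2 / (2 * ζ)) + 2 * ζ * ∫ s in t1..c, (deriv v s) ^ 2 := by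
      rw [intervalIntegral.integral_add (f := fun _ => M ^ 2 / (2 * ζ))
        (g := fun s => 2 * ζ * (deriv v s) ^ 2) (intervalIntegrable_const)
        ((continuous_const.mul (hcdv.pow 2)).intervalIntegrable _ _),
        intervalIntegral.integral_const, intervalIntegral.integral_const_mul]
      simp [smul_eq_mul]
    have hlen1 : c - t1 ≤ ζ := by
      have := hc.2; linarith
    have h1 : (c - t1) * (M ^ 2 / (2 * ζ)) ≤ M ^ 2 / 2 := by
      have h0 : 0 ≤ M ^ 2 / (2 * ζ) := by positivity
      calc (c - t1) * (M ^ 2 / (2 * ζ)) ≤ ζ * (M ^ 2 / (2 * ζ)) :=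
            mul_le_mul_of_nonneg_right hlen1 h0
        _ = M ^ 2 / 2 := by field_simp
    have h2 : 2 * ζ * (∫ s in t1..c, (deriv v s) ^ 2) ≤ 2 * ζ * E := by
      apply mul_le_mul_of_nonneg_left henergy (by positivity)
    nlinarith [hM2, hmono, hsplit]
  -- combine
  have hE0 : 0 ≤ E := le_trans
    (intervalIntegral.integral_nonneg hc.1.le (fun s _ => sq_nonneg (deriv v s))) henergy
  have final : ∀ L : ℝ, 0 < L → L ≤ ζ / 2 → 1 ≤ A * M ^ 2 * (L * L) → 1 ≤ A * E * ζ ^ 3 := by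
    intro L hL0 hL h1
    have hAM : A * M ^ 2 ≤ A * (4 * ζ * E) := mul_le_mul_of_nonneg_left hEbound hA
    have hLL : L * L ≤ (ζ / 2) * (ζ / 2) := mul_le_mul hL hL hL0.le (by positivity)
    have hmul : A * M ^ 2 * (L * L) ≤ A * (4 * ζ * E) * ((ζ / 2) * (ζ / 2)) :=
      mul_le_mul hAM hLL (mul_nonneg hL0.le hL0.le) (by positivity)
    have hr : A * (4 * ζ * E) * ((ζ / 2) * (ζ / 2)) = A * E * ζ ^ 3 := by ring
    linarith
  rcases le_total (c - t1) (t2 - c) with h | h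
  · refine final (c - t1) (by linarith [hc.1]) (by linarith) ?_
    have h' : M * 1 ≤ M * (A * M ^ 2 * ((c - t1) * (c - t1))) := by nlinarith [hleft]
    exact le_of_mul_le_mul_left h' hM
  · refine final (t2 - c) (by linarith [hc.2]) (by linarith) ?_
    have h' : M * 1 ≤ M * (A * M ^ 2 * ((t2 - c) * (t2 - c))) := by nlinarith [hright]
    exact le_of_mul_le_mul_left h' hM

lemma stmt7_cube {x y C : ℝ} (hx : |x| ≤ C) (hy : |y| ≤ C) :
    |x ^ 3 - y ^ 3| ≤ 3 * C ^ 2 * |x - y| := by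
  have h : x ^ 3 - y ^ 3 = (x - y) * (x ^ 2 + x * y + y ^ 2) := by ring
  rw [h, abs_mul, mul_comm (3 * C ^ 2)]
  apply mul_le_mul_of_nonneg_left _ (abs_nonneg _)
  have hx' := abs_le.mp hx
  have hy' := abs_le.mp hy
  rw [abs_le]
  constructor
  · nlinarith [sq_nonneg (x + y)]
  · nlinarith [sq_nonneg (x - y), sq_nonneg (x + y)]

lemma stmt7_zero (τ : ℝ) (hτ : 0 < τ) (a : ℝ → ℝ) (A : ℝ)
    (ha_nonneg : ∀ t, 0 ≤ a t) (ha_bdd : ∀ t, a t ≤ A)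
    (u : ℝ → ℝ) (hu : ContDiff ℝ 2 u)
    (hu_eq : ∀ t ∈ Icc 0 τ, deriv (deriv u) t + a t * (u t) ^ 3 = 0)
    (t₀ : ℝ) (ht₀ : t₀ ∈ Ioo 0 τ) (h0 : u t₀ = 0) (h0' : deriv u t₀ = 0) :
    ∀ t ∈ Icc (0:ℝ) τ, u t = 0 := by
  have hA : 0 ≤ A := le_trans (ha_nonneg 0) (ha_bdd 0)
  have hcd : Differentiable ℝ u := hu.differentiable (by norm_num)
  have hv' : ContDiff ℝ (1 + 1) u := by
    have h21 : (2 : WithTop ℕ∞) = 1 + 1 := by norm_num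
    rwa [h21] at hu
  have hcd1 : ContDiff ℝ 1 (deriv u) := (contDiff_succ_iff_deriv.mp hv').2.2
  have hdv : Differentiable ℝ (deriv u) := hcd1.differentiable one_ne_zero
  have hcu : Continuous u := hcd.continuous
  have hcdu : Continuous (deriv u) := hdv.continuous
  set f : ℝ → ℝ × ℝ := fun t => (u t, deriv u t) with hf_def
  have hfc : Continuous f := hcu.prodMk hcdu
  obtain ⟨p, hpmem, hpmax⟩ := isCompact_Icc.exists_isMaxOn
    (⟨0, left_mem_Icc.mpr hτ.le⟩ : (Icc (0:ℝ) τ).Nonempty) hfc.norm.continuousOn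
  set C : ℝ := ‖f p‖ with hC_def
  have hC0 : 0 ≤ C := norm_nonneg _
  have hC : ∀ t ∈ Icc (0:ℝ) τ, ‖f t‖ ≤ C := fun t ht => hpmax ht
  set Kr : ℝ := max 1 (3 * A * C ^ 2) with hKr_def
  have hKr0 : 0 ≤ Kr := le_trans zero_le_one (le_max_left _ _)
  set K : NNReal := ⟨Kr, hKr0⟩ with hK_def
  set v : ℝ → ℝ × ℝ → ℝ × ℝ := fun t q => (q.2, -(a t * q.1 ^ 3)) with hv_def
  have hlip : ∀ t, LipschitzOnWith K (v t) (Metric.closedBall 0 C) := by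
    intro t
    apply LipschitzOnWith.of_dist_le_mul
    intro x hx y hy
    have hxC : ‖x‖ ≤ C := by rwa [Metric.mem_closedBall, dist_zero_right] at hx
    have hyC : ‖y‖ ≤ C := by rwa [Metric.mem_closedBall, dist_zero_right] at hy
    have hx1 : |x.1| ≤ C := le_trans (norm_fst_le x) hxC
    have hy1 : |y.1| ≤ C := le_trans (norm_fst_le y) hyC
    have hKcoe : (K : ℝ) = Kr := rfl
    rw [Prod.dist_eq, Prod.dist_eq, hKcoe]
    have hd1 : dist x.1 y.1 ≤ max (dist x.1 y.1) (dist x.2 y.2) := le_max_left _ _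
    have hd2 : dist x.2 y.2 ≤ max (dist x.1 y.1) (dist x.2 y.2) := le_max_right _ _
    have hdnn : 0 ≤ max (dist x.1 y.1) (dist x.2 y.2) :=
      le_trans dist_nonneg hd1
    apply max_le
    · show dist x.2 y.2 ≤ Kr * max (dist x.1 y.1) (dist x.2 y.2)
      calc dist x.2 y.2 = 1 * dist x.2 y.2 := (one_mul _).symm
        _ ≤ Kr * max (dist x.1 y.1) (dist x.2 y.2) :=
            mul_le_mul (le_max_left _ _) hd2 dist_nonneg hKr0
    · show dist (-(a t * x.1 ^ 3)) (-(a t * y.1 ^ 3)) ≤ _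
      rw [Real.dist_eq]
      have he : -(a t * x.1 ^ 3) - -(a t * y.1 ^ 3) = a t * (y.1 ^ 3 - x.1 ^ 3) := by ring
      rw [he, abs_mul, abs_of_nonneg (ha_nonneg t)]
      calc a t * |y.1 ^ 3 - x.1 ^ 3| ≤ A * (3 * C ^ 2 * |y.1 - x.1|) := by
            apply mul_le_mul (ha_bdd t) (stmt7_cube hy1 hx1) (abs_nonneg _) hA
        _ = (3 * A * C ^ 2) * dist x.1 y.1 := by
            rw [Real.dist_eq, abs_sub_comm x.1 y.1]; ring
        _ ≤ Kr * max (dist x.1 y.1) (dist x.2 y.2) :=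
            mul_le_mul (le_max_right _ _) hd1 dist_nonneg hKr0
  have hf' : ∀ t ∈ Ioo (0:ℝ) τ, HasDerivAt f (v t (f t)) t := by
    intro t ht
    have h1 : HasDerivAt u (deriv u t) t := (hcd t).hasDerivAt
    have h2 : HasDerivAt (deriv u) (deriv (deriv u) t) t := (hdv t).hasDerivAt
    have h3 := h1.prodMk h2
    have heq : deriv (deriv u) t = -(a t * u t ^ 3) := by
      have := hu_eq t (Ioo_subset_Icc_self ht); linarith
    rw [heq] at h3
    exact h3
  have hfs : ∀ t ∈ Ioo (0:ℝ) τ, f t ∈ Metric.closedBall (0 : ℝ × ℝ) C := by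
    intro t ht
    rw [Metric.mem_closedBall, dist_zero_right]
    exact hC t (Ioo_subset_Icc_self ht)
  set g : ℝ → ℝ × ℝ := fun _ => (0, 0) with hg_def
  have hg' : ∀ t ∈ Ioo (0:ℝ) τ, HasDerivAt g (v t (g t)) t := by
    intro t ht
    have : v t (g t) = 0 := by simp [hv_def, hg_def]
    rw [this]
    exact hasDerivAt_const t _
  have hgs : ∀ t ∈ Ioo (0:ℝ) τ, g t ∈ Metric.closedBall (0 : ℝ × ℝ) C := by
    intro t ht
    simpa [hg_def, Prod.norm_def] using hC0
  have heq0 : f t₀ = g t₀ := by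
    simp [hf_def, hg_def, h0, h0']
  have huniq : EqOn f g (Icc 0 τ) :=
    ODE_solution_unique_of_mem_Icc (fun t _ => hlip t) ht₀ hfc.continuousOn hf' hfs
      continuous_const.continuousOn hg' hgs heq0
  intro t ht
  have := huniq ht
  exact (Prod.ext_iff.mp this).1

/-- A nontrivial solution of `u'' + a u³ = 0` on `[0,τ]` with energy at most `E`,
where `‖a‖_∞ · E · ζ³ < 1`, cannot have two distinct zeros in any subinterval of
length at most `ζ`. -/
theorem stmt7 (τ : ℝ) (hτ : 0 < τ) (a : ℝ → ℝ) (A : ℝ)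
    (ha_nonneg : ∀ t, 0 ≤ a t) (ha_bdd : ∀ t, a t ≤ A) (ha_meas : Measurable a)
    (E ζ : ℝ) (hE : 0 < E) (hζ : ζ ∈ Ioo 0 τ) (hsmall : A * E * ζ ^ 3 < 1)
    (u : ℝ → ℝ) (hu : ContDiff ℝ 2 u)
    (hu_nontriv : ∃ t ∈ Icc (0:ℝ) τ, u t ≠ 0)
    (hu_eq : ∀ t ∈ Icc 0 τ, deriv (deriv u) t + a t * (u t) ^ 3 = 0)
    (hu_energy : (∫ t in (0:ℝ)..τ, (deriv u t) ^ 2) ≤ E) :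
    ∀ t1 ∈ Icc (0:ℝ) τ, ∀ t2 ∈ Icc (0:ℝ) τ, t1 < t2 → t2 - t1 ≤ ζ →
      u t1 = 0 → u t2 ≠ 0 := by
  intro t1 ht1 t2 ht2 hlt hlen hz1 hz2
  have hsub : Icc t1 t2 ⊆ Icc 0 τ := Icc_subset_Icc ht1.1 ht2.2
  have hcd : Differentiable ℝ u := hu.differentiable (by norm_num)
  have hv2 : ContDiff ℝ (1 + 1) u := by
    have h21 : (2 : WithTop ℕ∞) = 1 + 1 := by norm_num
    rwa [h21] at hu
  have hcd1 : ContDiff ℝ 1 (deriv u) := (contDiff_succ_iff_deriv.mp hv2).2.2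
  have hdv : Differentiable ℝ (deriv u) := hcd1.differentiable one_ne_zero
  have hcu : Continuous u := hcd.continuous
  have hcdu : Continuous (deriv u) := hdv.continuous
  -- max of |u| on [t1,t2]
  obtain ⟨c, hcmem, hcmax⟩ := isCompact_Icc.exists_isMaxOn
    (⟨t1, left_mem_Icc.mpr hlt.le⟩ : (Icc t1 t2).Nonempty)
    (hcu.abs.continuousOn)
  have hmaxabs : ∀ t ∈ Icc t1 t2, |u t| ≤ |u c| := fun t ht => hcmax ht
  rcases (abs_nonneg (u c)).lt_or_eq with hpos | hzeroM
  · -- |u c| > 0 : interior maximum, apply key lemma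
    have hct1 : t1 < c := by
      rcases hcmem.1.lt_or_eq with h | h
      · exact h
      · exfalso; rw [← h, hz1] at hpos; simp at hpos
    have hct2 : c < t2 := by
      rcases hcmem.2.lt_or_eq with h | h
      · exact h
      · exfalso; rw [h, hz2] at hpos; simp at hpos
    have hcIoo : c ∈ Ioo t1 t2 := ⟨hct1, hct2⟩
    have henu : (∫ t in t1..c, (deriv u t) ^ 2) ≤ E := by
      refine le_trans (intervalIntegral.integral_mono_interval ht1.1 hct1.le
        (hct2.le.trans ht2.2) (Filter.Eventually.of_forall fun x => sq_nonneg _)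
        ((hcdu.pow 2).intervalIntegrable _ _)) hu_energy
    rcases le_or_gt 0 (u c) with hs | hs
    · have habs : |u c| = u c := abs_of_nonneg hs
      have h1 : 1 ≤ A * E * ζ ^ 3 := by
        refine stmt7_key a u A E ζ t1 c t2 ha_nonneg ha_bdd hζ.1 hlen hu
          (fun t ht => ?_) hcIoo (fun t ht => habs ▸ hmaxabs t ht) hz1 hz2
          (habs ▸ hpos) henu
        have := hu_eq t (hsub ht); linarith
      linarith
    · have habs : |u c| = -u c := abs_of_neg hs
      have hdneg : deriv (fun t => -u t) = fun t => -deriv u t :=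
        funext fun t => deriv.neg
      have hddneg : deriv (deriv fun t => -u t) = fun t => -(deriv (deriv u) t) := by
        rw [hdneg]; exact funext fun t => deriv.neg
      have h1 : 1 ≤ A * E * ζ ^ 3 := by
        refine stmt7_key a (fun t => -u t) A E ζ t1 c t2 ha_nonneg ha_bdd hζ.1 hlen
          hu.neg (fun t ht => ?_) hcIoo (fun t ht => ?_) (by show -u t1 = 0; rw [hz1, neg_zero])
          (by show -u t2 = 0; rw [hz2, neg_zero])
          (by show (0:ℝ) < -u c; rw [← habs]; exact hpos) ?_
        · have h := hu_eq t (hsub ht)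
          rw [hddneg]
          have he3 : (-u t) ^ 3 = -(u t ^ 3) := by ring
          show -(deriv (deriv u) t) = -(a t * (-u t) ^ 3)
          rw [he3]
          have : a t * -(u t ^ 3) = -(a t * u t ^ 3) := by ring
          rw [this]
          linarith
        · show |-u t| ≤ -u c
          rw [abs_neg, ← habs]; exact hmaxabs t ht
        · have : (∫ t in t1..c, (deriv (fun s => -u s) t) ^ 2)
              = ∫ t in t1..c, (deriv u t) ^ 2 := by
            simp [hdneg]
          rw [this]; exact henu
      linarith
  · -- |u c| = 0 : u vanishes on [t1,t2]; by uniqueness u ≡ 0, contradiction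
    have hzero : ∀ t ∈ Icc t1 t2, u t = 0 := by
      intro t ht
      have := hmaxabs t ht
      rw [← hzeroM] at this
      exact abs_eq_zero.mp (le_antisymm this (abs_nonneg _))
    set t₀ : ℝ := (t1 + t2) / 2 with ht₀_def
    have ht₀m : t₀ ∈ Ioo t1 t2 := ⟨by simp [ht₀_def]; linarith, by simp [ht₀_def]; linarith⟩
    have ht₀Ioo : t₀ ∈ Ioo 0 τ :=
      ⟨lt_of_le_of_lt ht1.1 ht₀m.1, lt_of_lt_of_le ht₀m.2 ht2.2⟩
    have h0 : u t₀ = 0 := hzero t₀ (Ioo_subset_Icc_self ht₀m)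
    have h0' : deriv u t₀ = 0 := by
      have hev : u =ᶠ[nhds t₀] fun _ => (0:ℝ) :=
        Filter.eventually_of_mem (Ioo_mem_nhds ht₀m.1 ht₀m.2)
          (fun x hx => hzero x (Ioo_subset_Icc_self hx))
      calc deriv u t₀ = deriv (fun _ => (0:ℝ)) t₀ := hev.deriv_eq
        _ = 0 := deriv_const _ _
    have hall := stmt7_zero τ hτ a A ha_nonneg ha_bdd u hu hu_eq t₀ ht₀Ioo h0 h0'
    obtain ⟨t, htm, hne⟩ := hu_nontriv
    exact hne (hall t htm)
end

section
/- For every ε > 0, R > 0, K > 0 there exists μ̂ > 0 such that for all μ > μ̂ and every solution u of u'' − μ b(t) u^3 = 0 on [τ,T] with ||u||_{L^∞(τ,T)} ≤ K, if u(τ) ≥ 0 and u'(τ⁺) ≥ −R, then u(τ) ≤ ε. -/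
open Set MeasureTheory

/-- For μ large, solutions of `u'' = μ b u³` which are bounded by `K`, nonnegative at `τ`
and with right derivative at `τ` bounded below by `-R`, must be small at `τ`. -/
theorem stmt9 (τ T : ℝ) (hτT : τ < T) (b : ℝ → ℝ)
    (hb : ∀ t, 0 ≤ b t) (hb_meas : Measurable b)
    (hb_nontriv : ∀ δ ∈ Ioo 0 (T - τ), 0 < ∫ t in τ..(τ + δ), b t)
    (ε R K : ℝ) (hε : 0 < ε) (hR : 0 < R) (hK : 0 < K) :
    ∃ μhat > 0, ∀ μ > μhat, ∀ u : ℝ → ℝ, ContDiff ℝ 2 u →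
      (∀ t ∈ Icc τ T, deriv (deriv u) t = μ * b t * (u t) ^ 3) →
      (∀ t ∈ Icc τ T, |u t| ≤ K) →
      0 ≤ u τ → -R ≤ deriv u τ → u τ ≤ ε := by
  set δ : ℝ := min (ε/(2*R)) ((T-τ)/2) with hδdef
  have hδpos : 0 < δ := lt_min (by positivity) (by linarith)
  have hδ1 : R * δ ≤ ε/2 := by
    have : δ ≤ ε/(2*R) := min_le_left _ _
    calc R * δ ≤ R * (ε/(2*R)) := by nlinarith
    _ = ε/2 := by field_simp
  have hδ2 : τ + δ ≤ T := by
    have : δ ≤ (T-τ)/2 := min_le_right _ _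
    linarith
  have hδ3 : δ/2 ∈ Ioo 0 (T - τ) := ⟨by linarith, by linarith⟩
  have hI : 0 < ∫ t in τ..(τ+δ/2), b t := hb_nontriv _ hδ3
  set I : ℝ := ∫ t in τ..(τ+δ/2), b t with hIdef
  set c : ℝ := (ε/2)^3 with hcdef
  have hcpos : 0 < c := by positivity
  refine ⟨(4*K/δ + R)/(c*I), by positivity, ?_⟩
  intro μ hμ u hu hode hbound hu0 hu'0
  by_contra hcon
  push_neg at hcon
  have hμpos : 0 < μ := lt_trans (by positivity) hμ
  -- regularity
  have h2 : ContDiff ℝ ((1:ℕ∞)+1) u := by exact_mod_cast hu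
  have h1 : ContDiff ℝ 1 (deriv u) := (contDiff_succ_iff_deriv.mp h2).2.2
  have hud : Differentiable ℝ u := (contDiff_succ_iff_deriv.mp h2).1
  have hu'd : Differentiable ℝ (deriv u) := h1.differentiable (by norm_num)
  have hu'c : Continuous (deriv u) := hu'd.continuous
  have hu''c : Continuous (deriv (deriv u)) := h1.continuous_deriv le_rfl
  -- FTC helper
  have FTC : ∀ (f : ℝ → ℝ), Differentiable ℝ f → Continuous (deriv f) →
      ∀ a₁ b₁ : ℝ, (∫ x in a₁..b₁, deriv f x) = f b₁ - f a₁ := by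
    intro f hf hf' a₁ b₁
    exact intervalIntegral.integral_deriv_eq_sub (fun x _ => hf x)
      (hf'.intervalIntegrable _ _)
  -- Step 1 : u > ε/2 on [τ, τ+δ]
  have key : ∀ t ∈ Icc τ (τ+δ), ε/2 < u t := by
    by_contra hA
    push_neg at hA
    obtain ⟨t₀, ht₀mem, ht₀⟩ := hA
    set A : Set ℝ := Icc τ (τ+δ) ∩ {t | u t ≤ ε/2} with hAdef
    have hAne : A.Nonempty := ⟨t₀, ht₀mem, ht₀⟩
    have hAcl : IsClosed A :=
      isClosed_Icc.inter (isClosed_le hud.continuous continuous_const)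
    have hAbdd : BddBelow A := ⟨τ, fun x hx => hx.1.1⟩
    set t₁ : ℝ := sInf A with ht₁def
    have ht₁A : t₁ ∈ A := hAcl.csInf_mem hAne hAbdd
    have ht₁mem : t₁ ∈ Icc τ (τ+δ) := ht₁A.1
    have ht₁le : u t₁ ≤ ε/2 := ht₁A.2
    have hτt₁ : τ < t₁ := by
      rcases lt_or_eq_of_le ht₁mem.1 with h | h
      · exact h
      · exfalso; rw [← h] at ht₁le; linarith
    -- on [τ, t₁), u > ε/2
    have hpos : ∀ s ∈ Ico τ t₁, ε/2 < u s := by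
      intro s hs
      by_contra hsle
      push_neg at hsle
      have : s ∈ A := ⟨⟨hs.1, le_trans hs.2.le ht₁mem.2⟩, hsle⟩
      exact absurd (csInf_le hAbdd this) (not_le.mpr hs.2)
    -- deriv u is monotone on [τ, t₁]
    have hmono : MonotoneOn (deriv u) (Icc τ t₁) := by
      apply monotoneOn_of_deriv_nonneg (convex_Icc τ t₁) (hu'c.continuousOn)
      · exact hu'd.differentiableOn.mono interior_subset
      · intro x hx
        rw [interior_Icc] at hx
        have hxI : x ∈ Icc τ T := ⟨hx.1.le, by linarith [hx.2, ht₁mem.2]⟩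
        rw [hode x hxI]
        have hux : 0 ≤ u x := le_of_lt (lt_trans (by linarith) (hpos x ⟨hx.1.le, hx.2⟩))
        exact mul_nonneg (mul_nonneg hμpos.le (hb x)) (pow_nonneg hux 3)
    have hderiv_ge : ∀ s ∈ Icc τ t₁, -R ≤ deriv u s := by
      intro s hs
      exact le_trans hu'0 (hmono ⟨le_refl τ, hτt₁.le⟩ hs hs.1)
    have hint : (∫ x in τ..t₁, deriv u x) = u t₁ - u τ := FTC u hud hu'c τ t₁
    have hge : u t₁ - u τ ≥ (t₁ - τ) * (-R) := by
      rw [← hint]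
      calc (t₁ - τ) * (-R) = ∫ _ in τ..t₁, (-R : ℝ) := by
            rw [intervalIntegral.integral_const, smul_eq_mul]
      _ ≤ ∫ x in τ..t₁, deriv u x := by
            apply intervalIntegral.integral_mono_on hτt₁.le
              (intervalIntegrable_const) (hu'c.intervalIntegrable _ _)
            exact hderiv_ge
    have ht₁δ : t₁ - τ ≤ δ := by linarith [ht₁mem.2]
    nlinarith
  -- b is interval integrable on [τ, τ+δ/2]
  have hIb : IntervalIntegrable b volume τ (τ+δ/2) := by
    by_contra h
    have h0 : I = 0 := by rw [hIdef]; exact intervalIntegral.integral_undef h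
    linarith
  -- Step 2 : deriv u is large on [τ+δ/2, τ+δ]
  have hstep : ∀ t ∈ Icc (τ+δ/2) (τ+δ), μ*c*I - R ≤ deriv u t := by
    intro t ht
    have htT : t ≤ T := le_trans ht.2 hδ2
    have hτt : τ ≤ t := by linarith [ht.1]
    have hFTC2 : (∫ x in τ..t, deriv (deriv u) x) = deriv u t - deriv u τ :=
      FTC (deriv u) hu'd hu''c τ t
    have hsplit : (∫ x in τ..(τ+δ/2), deriv (deriv u) x)
        + (∫ x in (τ+δ/2)..t, deriv (deriv u) x) = ∫ x in τ..t, deriv (deriv u) x :=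
      intervalIntegral.integral_add_adjacent_intervals
        (hu''c.intervalIntegrable _ _) (hu''c.intervalIntegrable _ _)
    have hnn : (0:ℝ) ≤ ∫ x in (τ+δ/2)..t, deriv (deriv u) x := by
      apply intervalIntegral.integral_nonneg ht.1
      intro s hs
      have hsT : s ∈ Icc τ T := ⟨by linarith [hs.1], le_trans hs.2 htT⟩
      rw [hode s hsT]
      have hus : 0 ≤ u s :=
        le_of_lt (lt_trans (by linarith) (key s ⟨by linarith [hs.1], le_trans hs.2 ht.2⟩))
      exact mul_nonneg (mul_nonneg hμpos.le (hb s)) (pow_nonneg hus 3)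
    have hfirst : μ*c*I ≤ ∫ x in τ..(τ+δ/2), deriv (deriv u) x := by
      have : (∫ x in τ..(τ+δ/2), μ*c*(b x)) ≤ ∫ x in τ..(τ+δ/2), deriv (deriv u) x := by
        apply intervalIntegral.integral_mono_on (by linarith)
          (hIb.const_mul (μ*c)) (hu''c.intervalIntegrable _ _)
        intro s hs
        have hsT : s ∈ Icc τ T := ⟨hs.1, by linarith [hs.2]⟩
        rw [hode s hsT]
        have hus : ε/2 ≤ u s := le_of_lt (key s ⟨hs.1, by linarith [hs.2]⟩)
        have hc3 : c ≤ (u s)^3 := by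
          rw [hcdef]
          exact pow_le_pow_left₀ (by linarith) hus 3
        have := hb s
        calc μ*c*(b s) = μ*(b s)*c := by ring
        _ ≤ μ*(b s)*(u s)^3 := by
              apply mul_le_mul_of_nonneg_left hc3 (by positivity)
        _ = μ * b s * u s ^ 3 := by ring
      calc μ*c*I = ∫ x in τ..(τ+δ/2), μ*c*(b x) := by
            rw [hIdef, ← intervalIntegral.integral_const_mul]
      _ ≤ _ := this
    have : μ*c*I ≤ deriv u t - deriv u τ := by
      rw [← hFTC2, ← hsplit]; linarith
    linarith
  -- Step 3 : conclude
  have hmemA : τ+δ/2 ∈ Icc τ T := ⟨by linarith, by linarith⟩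
  have hmemB : τ+δ ∈ Icc τ T := ⟨by linarith, by linarith⟩
  have hfinal : u (τ+δ) - u (τ+δ/2) ≥ (δ/2) * (μ*c*I - R) := by
    rw [← FTC u hud hu'c (τ+δ/2) (τ+δ)]
    calc (δ/2) * (μ*c*I - R) = ∫ _ in (τ+δ/2)..(τ+δ), (μ*c*I - R) := by
          rw [intervalIntegral.integral_const, smul_eq_mul]; ring
    _ ≤ ∫ x in (τ+δ/2)..(τ+δ), deriv u x := by
          apply intervalIntegral.integral_mono_on (by linarith)
            intervalIntegrable_const (hu'c.intervalIntegrable _ _)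
          exact hstep
  have hb1 := abs_le.mp (hbound _ hmemA)
  have hb2 := abs_le.mp (hbound _ hmemB)
  have hμ' : 4*K/δ + R < μ*(c*I) := (div_lt_iff₀ (by positivity)).mp hμ
  have h2K : (δ/2) * (μ*c*I - R) > (δ/2) * (4*K/δ) := by
    apply mul_lt_mul_of_pos_left (by linarith) (by linarith)
  have : (δ/2) * (4*K/δ) = 2*K := by field_simp; ring
  linarith
end

section
/- For any δ ∈ (0, (T−τ)/2) there exists C_δ > 0 (independent of μ and of the solution) such that any solution u of u'' − μ b(t) u^3 = 0 on [τ,T] satisfies |u(t)| ≤ C_δ (max(|u(τ)|, |u(T)|)/μ)^{1/3} for every t ∈ [τ+δ, T−δ]. -/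
open Set MeasureTheory

lemma stmt10_posK (a c : ℝ) (hac : a < c) (b : ℝ → ℝ) (hb : ∀ s, 0 ≤ b s)
    (hbi : IntervalIntegrable b volume a c) (hpos : 0 < ∫ s in a..c, b s) :
    0 < ∫ r in a..c, ∫ s in a..r, b s := by
  set F : ℝ → ℝ := fun r => ∫ s in a..r, b s with hFdef
  have hsub : ∀ x y : ℝ, a ≤ x → x ≤ y → y ≤ c → IntervalIntegrable b volume x y := by
    intro x y hx hxy hyc
    refine hbi.mono_set ?_
    rw [uIcc_of_le hxy, uIcc_of_le hac.le]
    exact Icc_subset_Icc hx hyc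
  have hFcont : ContinuousOn F (Icc a c) := by
    have := intervalIntegral.continuousOn_primitive_interval
      (a := a) (b := c) (μ := volume) (f := b)
      (by rw [uIcc_of_le hac.le]; exact
        (intervalIntegrable_iff_integrableOn_Icc_of_le hac.le).mp hbi)
    rwa [uIcc_of_le hac.le] at this
  have hFmono : MonotoneOn F (Icc a c) := by
    intro x hx y hy hxy
    have h1 : F x + ∫ s in x..y, b s = F y :=
      intervalIntegral.integral_add_adjacent_intervals
        (hsub a x le_rfl hx.1 hx.2) (hsub x y hx.1 hxy hy.2)
    have h2 : 0 ≤ ∫ s in x..y, b s :=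
      intervalIntegral.integral_nonneg hxy (fun s _ => hb s)
    linarith
  have hFnonneg : ∀ x ∈ Icc a c, 0 ≤ F x := fun x hx =>
    intervalIntegral.integral_nonneg hx.1 (fun s _ => hb s)
  have hFc : 0 < F c := hpos
  -- find r₀ < c with F r₀ > 0
  have htend : Filter.Tendsto F (nhdsWithin c (Ico a c)) (nhds (F c)) :=
    (hFcont c (right_mem_Icc.mpr hac.le)).mono_left
      (nhdsWithin_mono _ Ico_subset_Icc_self)
  have hev : ∀ᶠ x in nhdsWithin c (Ico a c), 0 < F x :=
    htend.eventually (eventually_gt_nhds hFc)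
  have : Filter.NeBot (nhdsWithin c (Ico a c)) := right_nhdsWithin_Ico_neBot hac
  obtain ⟨r₀, hr₀F, hr₀mem⟩ := (hev.and (eventually_mem_nhdsWithin)).exists
  have hFint : ∀ x y : ℝ, a ≤ x → x ≤ y → y ≤ c → IntervalIntegrable F volume x y := by
    intro x y hx hxy hyc
    exact (hFcont.mono (Icc_subset_Icc hx hyc)).intervalIntegrable_of_Icc hxy
  have h1 : 0 ≤ ∫ r in a..r₀, F r :=
    intervalIntegral.integral_nonneg hr₀mem.1
      (fun x hx => hFnonneg x ⟨hx.1, hx.2.trans hr₀mem.2.le⟩)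
  have h2 : 0 < ∫ r in r₀..c, F r := by
    refine intervalIntegral.intervalIntegral_pos_of_pos_on (hFint r₀ c hr₀mem.1 hr₀mem.2.le le_rfl) ?_ hr₀mem.2
    intro x hx
    exact lt_of_lt_of_le hr₀F
      (hFmono ⟨hr₀mem.1, hr₀mem.2.le⟩ ⟨hr₀mem.1.trans hx.1.le, hx.2.le⟩ hx.1.le)
  have h3 : (∫ r in a..r₀, F r) + ∫ r in r₀..c, F r = ∫ r in a..c, F r :=
    intervalIntegral.integral_add_adjacent_intervals
      (hFint a r₀ le_rfl hr₀mem.1 hr₀mem.2.le) (hFint r₀ c hr₀mem.1 hr₀mem.2.le le_rfl)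
  linarith

lemma stmt10_compK (a a' c : ℝ) (haa' : a ≤ a') (ha'c : a' ≤ c) (b : ℝ → ℝ)
    (hb : ∀ s, 0 ≤ b s) (hbi : IntervalIntegrable b volume a c) :
    (∫ r in a'..c, ∫ s in a'..r, b s) ≤ ∫ r in a..c, ∫ s in a..r, b s := by
  have hac : a ≤ c := haa'.trans ha'c
  have hsub : ∀ x y : ℝ, a ≤ x → x ≤ y → y ≤ c → IntervalIntegrable b volume x y := by
    intro x y hx hxy hyc
    refine hbi.mono_set ?_
    rw [uIcc_of_le hxy, uIcc_of_le hac]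
    exact Icc_subset_Icc hx hyc
  have hFcont : ContinuousOn (fun r => ∫ s in a..r, b s) (Icc a c) := by
    have := intervalIntegral.continuousOn_primitive_interval
      (a := a) (b := c) (μ := volume) (f := b)
      (by rw [uIcc_of_le hac]; exact
        (intervalIntegrable_iff_integrableOn_Icc_of_le hac).mp hbi)
    rwa [uIcc_of_le hac] at this
  have hGcont : ContinuousOn (fun r => ∫ s in a'..r, b s) (Icc a' c) := by
    have := intervalIntegral.continuousOn_primitive_interval
      (a := a') (b := c) (μ := volume) (f := b)
      (by rw [uIcc_of_le ha'c]; exact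
        (intervalIntegrable_iff_integrableOn_Icc_of_le ha'c).mp (hsub a' c haa' ha'c le_rfl))
    rwa [uIcc_of_le ha'c] at this
  have h1 : 0 ≤ ∫ r in a..a', ∫ s in a..r, b s :=
    intervalIntegral.integral_nonneg haa' (fun x hx =>
      intervalIntegral.integral_nonneg hx.1 (fun s _ => hb s))
  have h2 : (∫ r in a'..c, ∫ s in a'..r, b s) ≤ ∫ r in a'..c, ∫ s in a..r, b s := by
    refine intervalIntegral.integral_mono_on ha'c
      ((hGcont.mono (Icc_subset_Icc le_rfl le_rfl)).intervalIntegrable_of_Icc ha'c)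
      ((hFcont.mono (Icc_subset_Icc haa' le_rfl)).intervalIntegrable_of_Icc ha'c) ?_
    intro x hx
    have hsplit : (∫ s in a..a', b s) + ∫ s in a'..x, b s = ∫ s in a..x, b s :=
      intervalIntegral.integral_add_adjacent_intervals
        (hsub a a' le_rfl haa' ha'c) (hsub a' x haa' hx.1 hx.2)
    have : 0 ≤ ∫ s in a..a', b s :=
      intervalIntegral.integral_nonneg haa' (fun s _ => hb s)
    linarith
  have h3 : (∫ r in a..a', ∫ s in a..r, b s) + ∫ r in a'..c, ∫ s in a..r, b s
      = ∫ r in a..c, ∫ s in a..r, b s :=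
    intervalIntegral.integral_add_adjacent_intervals
      ((hFcont.mono (Icc_subset_Icc le_rfl ha'c)).intervalIntegrable_of_Icc haa')
      ((hFcont.mono (Icc_subset_Icc haa' le_rfl)).intervalIntegrable_of_Icc ha'c)
  linarith


lemma stmt10_core (t T : ℝ) (htT : t ≤ T) (b : ℝ → ℝ) (hb : ∀ s, 0 ≤ b s)
    (hbi : IntervalIntegrable b volume t T) (μ : ℝ) (hμ : 0 < μ)
    (u : ℝ → ℝ) (hu : ContDiff ℝ 2 u)
    (hode : ∀ s ∈ Icc t T, deriv (deriv u) s = μ * b s * u s ^ 3)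
    (hm : 0 < u t) (hd : 0 ≤ deriv u t) :
    μ * u t ^ 3 * (∫ r in t..T, ∫ s in t..r, b s) + u t ≤ u T := by
  -- smoothness
  have h2 : ContDiff ℝ (1+1) u := by norm_num at hu ⊢; exact hu
  obtain ⟨hud, -, h4⟩ := contDiff_succ_iff_deriv.mp h2
  obtain ⟨hud2, hcont2⟩ := contDiff_one_iff_deriv.mp h4
  have hucont : Continuous u := hud.continuous
  have hu'cont : Continuous (deriv u) := hud2.continuous
  have hsub : ∀ x y : ℝ, t ≤ x → x ≤ y → y ≤ T → IntervalIntegrable b volume x y := by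
    intro x y hx hxy hyc
    refine hbi.mono_set ?_
    rw [uIcc_of_le hxy, uIcc_of_le htT]
    exact Icc_subset_Icc hx hyc
  -- g = derivative of u^2
  set g : ℝ → ℝ := fun s => 2 * u s * deriv u s with hgdef
  have hg_hasderiv : ∀ s : ℝ, HasDerivAt g
      (2 * deriv u s * deriv u s + 2 * u s * deriv (deriv u) s) s := by
    intro s
    exact (((hud s).hasDerivAt.const_mul (2:ℝ)).mul (hud2 s).hasDerivAt)
  have hg_mono : MonotoneOn g (Icc t T) := by
    refine monotoneOn_of_deriv_nonneg (convex_Icc t T)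
      (Continuous.continuousOn (by continuity)) ?_ ?_
    · intro x hx
      exact (hg_hasderiv x).differentiableAt.differentiableWithinAt
    · intro x hx
      rw [interior_Icc] at hx
      rw [(hg_hasderiv x).deriv]
      have hx' : x ∈ Icc t T := ⟨hx.1.le, hx.2.le⟩
      have h5 : u x * deriv (deriv u) x = μ * b x * (u x ^ 2) ^ 2 := by
        rw [hode x hx']; ring
      nlinarith [sq_nonneg (deriv u x),
        mul_nonneg (mul_nonneg hμ.le (hb x)) (sq_nonneg (u x ^ 2))]
  have hg_nonneg : ∀ s ∈ Icc t T, 0 ≤ g s := by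
    intro s hs
    have : g t ≤ g s := hg_mono (left_mem_Icc.mpr htT) hs hs.1
    have hgt : 0 ≤ g t := mul_nonneg (by linarith) hd
    linarith
  -- u^2 is monotone on [t,T]
  have hsq_mono : MonotoneOn (fun s => u s ^ 2) (Icc t T) := by
    refine monotoneOn_of_deriv_nonneg (convex_Icc t T)
      (Continuous.continuousOn (by continuity)) ?_ ?_
    · intro x hx
      exact ((hud x).hasDerivAt.pow 2).differentiableAt.differentiableWithinAt
    · intro x hx
      rw [interior_Icc] at hx
      rw [show deriv (fun s => u s ^ 2) x = _ from ((hud x).hasDerivAt.pow 2).deriv]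
      have hgx := hg_nonneg x ⟨hx.1.le, hx.2.le⟩
      have hgx' : (0:ℝ) ≤ 2 * u x * deriv u x := hgx
      simpa [pow_one] using hgx'
  have hsq : ∀ s ∈ Icc t T, u t ^ 2 ≤ u s ^ 2 := fun s hs =>
    hsq_mono (left_mem_Icc.mpr htT) hs hs.1
  -- u ≥ u t > 0 on [t,T]
  have hul : ∀ s ∈ Icc t T, u t ≤ u s := by
    intro s hs
    by_contra hlt
    push_neg at hlt
    have hneg : u s ≤ -u t := by nlinarith [hsq s hs]
    have hzero : (0:ℝ) ∈ Icc (u s) (u t) := ⟨by linarith, hm.le⟩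
    have hiv := intermediate_value_Icc' hs.1
      (hucont.continuousOn (s := Icc t s))
    obtain ⟨r, hr, hur⟩ := hiv hzero
    have : u t ^ 2 ≤ u r ^ 2 := hsq r ⟨hr.1, hr.2.trans hs.2⟩
    rw [hur] at this
    nlinarith
  -- derivative lower bound
  have hderiv_ge : ∀ r ∈ Icc t T,
      deriv u t + μ * u t ^ 3 * ∫ s in t..r, b s ≤ deriv u r := by
    intro r hr
    have hftc : ∫ s in t..r, deriv (deriv u) s = deriv u r - deriv u t := by
      refine intervalIntegral.integral_deriv_eq_sub (fun x _ => hud2 x) ?_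
      exact (hcont2.continuousOn).intervalIntegrable
    have hcongr : ∫ s in t..r, deriv (deriv u) s = ∫ s in t..r, μ * b s * u s ^ 3 := by
      refine intervalIntegral.integral_congr ?_
      intro s hs
      rw [uIcc_of_le hr.1] at hs
      exact hode s ⟨hs.1, hs.2.trans hr.2⟩
    have hbint : IntervalIntegrable b volume t r := hsub t r le_rfl hr.1 hr.2
    have hint1 : IntervalIntegrable (fun s => μ * u t ^ 3 * b s) volume t r :=
      hbint.const_mul _
    have hint2 : IntervalIntegrable (fun s => μ * b s * u s ^ 3) volume t r := by
      have : IntervalIntegrable (fun s => (μ * b s) * u s ^ 3) volume t r :=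
        (hbint.const_mul μ).mul_continuousOn ((hucont.pow 3).continuousOn)
      simpa using this
    have hmono : (∫ s in t..r, μ * u t ^ 3 * b s) ≤ ∫ s in t..r, μ * b s * u s ^ 3 := by
      refine intervalIntegral.integral_mono_on hr.1 hint1 hint2 ?_
      intro s hs
      have hus : u t ≤ u s := hul s ⟨hs.1, hs.2.trans hr.2⟩
      have h3 : u t ^ 3 ≤ u s ^ 3 := pow_le_pow_left₀ hm.le hus 3
      have := mul_nonneg hμ.le (hb s)
      nlinarith
    have hconst : (∫ s in t..r, μ * u t ^ 3 * b s) = μ * u t ^ 3 * ∫ s in t..r, b s :=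
      intervalIntegral.integral_const_mul _ _
    linarith
  -- integrate once more
  set B : ℝ → ℝ := fun r => ∫ s in t..r, b s with hBdef
  have hBcont : ContinuousOn B (Icc t T) := by
    have := intervalIntegral.continuousOn_primitive_interval
      (a := t) (b := T) (μ := volume) (f := b)
      (by rw [uIcc_of_le htT]; exact
        (intervalIntegrable_iff_integrableOn_Icc_of_le htT).mp hbi)
    rwa [uIcc_of_le htT] at this
  have hftc2 : ∫ r in t..T, deriv u r = u T - u t := by
    refine intervalIntegral.integral_deriv_eq_sub (fun x _ => hud x) ?_
    exact (hu'cont.continuousOn).intervalIntegrable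
  have hBint : IntervalIntegrable B volume t T :=
    hBcont.intervalIntegrable_of_Icc htT
  have hmono2 : (∫ r in t..T, (deriv u t + μ * u t ^ 3 * B r))
      ≤ ∫ r in t..T, deriv u r := by
    refine intervalIntegral.integral_mono_on htT
      (intervalIntegrable_const.add (hBint.const_mul _)) 
      (hu'cont.continuousOn.intervalIntegrable) ?_
    intro r hr
    exact hderiv_ge r hr
  have hsplit : (∫ r in t..T, (deriv u t + μ * u t ^ 3 * B r))
      = (T - t) * deriv u t + μ * u t ^ 3 * ∫ r in t..T, B r := by
    rw [intervalIntegral.integral_add intervalIntegrable_const (hBint.const_mul _),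
      intervalIntegral.integral_const, intervalIntegral.integral_const_mul]
    simp [smul_eq_mul]
  have hTd : 0 ≤ (T - t) * deriv u t := mul_nonneg (by linarith) hd
  have : μ * u t ^ 3 * (∫ r in t..T, B r) ≤ u T - u t := by linarith
  simpa [hBdef] using (by linarith : μ * u t ^ 3 * (∫ r in t..T, B r) + u t ≤ u T)


lemma stmt10_aux2 (T δ t : ℝ) (b : ℝ → ℝ) (hb : ∀ s, 0 ≤ b s)
    (hbit : IntervalIntegrable b volume t T) (μ : ℝ) (hμ : 0 < μ)
    (v : ℝ → ℝ) (hv : ContDiff ℝ 2 v)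
    (hode : ∀ s ∈ Icc t T, deriv (deriv v) s = μ * b s * v s ^ 3)
    (ht2 : t ≤ T - δ) (hδ0 : 0 < δ)
    (hvt : 0 < v t) (hd : 0 ≤ deriv v t) :
    μ * v t ^ 3 * (∫ r in (T-δ)..T, ∫ s in (T-δ)..r, b s) ≤ |v T| := by
  have htT : t ≤ T := by linarith
  have hcore := stmt10_core t T htT b hb hbit μ hμ v hv hode hvt hd
  have hcomp := stmt10_compK t (T-δ) T ht2 (by linarith) b hb hbit
  have hmul : μ * v t ^ 3 * (∫ r in (T-δ)..T, ∫ s in (T-δ)..r, b s)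
      ≤ μ * v t ^ 3 * (∫ r in t..T, ∫ s in t..r, b s) :=
    mul_le_mul_of_nonneg_left hcomp (by positivity)
  have hle : μ * v t ^ 3 * (∫ r in (T-δ)..T, ∫ s in (T-δ)..r, b s) ≤ v T := by linarith
  exact hle.trans (le_abs_self _)

/-- Decay estimate: for any `δ ∈ (0,(T-τ)/2)` there is `C_δ > 0` (independent of `μ`
and of the solution) such that any solution of `u'' = μ b u³` satisfies
`|u(t)| ≤ C_δ (max(|u(τ)|,|u(T)|)/μ)^{1/3}` on `[τ+δ, T-δ]`. -/
theorem stmt10 (τ T : ℝ) (hτT : τ < T) (b : ℝ → ℝ)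
    (hb : ∀ t, 0 ≤ b t) (hb_meas : Measurable b)
    (hb_left : ∀ δ ∈ Ioo 0 (T - τ), 0 < ∫ t in τ..(τ + δ), b t)
    (hb_right : ∀ δ ∈ Ioo 0 (T - τ), 0 < ∫ t in (T - δ)..T, b t)
    (δ : ℝ) (hδ : δ ∈ Ioo 0 ((T - τ) / 2)) :
    ∃ C > 0, ∀ μ > (0:ℝ), ∀ u : ℝ → ℝ, ContDiff ℝ 2 u →
      (∀ t ∈ Icc τ T, deriv (deriv u) t = μ * b t * (u t) ^ 3) →
      ∀ t ∈ Icc (τ + δ) (T - δ),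
        |u t| ≤ C * (max |u τ| |u T| / μ) ^ ((1:ℝ)/3) := by
  obtain ⟨hδ0, hδhalf⟩ := hδ
  -- integrability of b on [τ, T]
  set δ₁ : ℝ := (T - τ) * 3 / 4 with hδ₁def
  have hδ₁mem : δ₁ ∈ Ioo 0 (T - τ) := ⟨by simp only [hδ₁def]; linarith, by simp only [hδ₁def]; linarith⟩
  have i1 : IntervalIntegrable b volume τ (τ + δ₁) := by
    by_contra h
    have := intervalIntegral.integral_undef h
    have h2 := hb_left δ₁ hδ₁mem
    rw [this] at h2; exact lt_irrefl 0 h2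
  have i2 : IntervalIntegrable b volume (T - δ₁) T := by
    by_contra h
    have := intervalIntegral.integral_undef h
    have h2 := hb_right δ₁ hδ₁mem
    rw [this] at h2; exact lt_irrefl 0 h2
  have hbi : IntervalIntegrable b volume τ T := by
    refine i1.trans (i2.mono_set ?_)
    rw [uIcc_of_le (by simp only [hδ₁def]; linarith : τ + δ₁ ≤ T),
      uIcc_of_le (by simp only [hδ₁def]; linarith : T - δ₁ ≤ T)]
    exact Icc_subset_Icc (by simp only [hδ₁def]; linarith) le_rfl
  -- reflected coefficient
  set b2 : ℝ → ℝ := fun s => b (τ + T - s) with hb2def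
  have hb2 : ∀ s, 0 ≤ b2 s := fun s => hb _
  have hbi2 : IntervalIntegrable b2 volume τ T := by
    have := (hbi.comp_sub_left (τ + T)).symm
    simpa using this
  -- the two constants
  set K1 : ℝ := ∫ r in (T-δ)..T, ∫ s in (T-δ)..r, b s with hK1def
  set K2 : ℝ := ∫ r in (T-δ)..T, ∫ s in (T-δ)..r, b2 s with hK2def
  have hsubδ : IntervalIntegrable b volume (T-δ) T := by
    refine hbi.mono_set ?_
    rw [uIcc_of_le (by linarith : T - δ ≤ T), uIcc_of_le hτT.le]
    exact Icc_subset_Icc (by linarith) le_rfl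
  have hsubδ2 : IntervalIntegrable b2 volume (T-δ) T := by
    refine hbi2.mono_set ?_
    rw [uIcc_of_le (by linarith : T - δ ≤ T), uIcc_of_le hτT.le]
    exact Icc_subset_Icc (by linarith) le_rfl
  have hK1 : 0 < K1 :=
    stmt10_posK (T-δ) T (by linarith) b hb hsubδ
      (hb_right δ ⟨hδ0, by linarith⟩)
  have hK2 : 0 < K2 := by
    refine stmt10_posK (T-δ) T (by linarith) b2 hb2 hsubδ2 ?_
    have heq : (∫ s in (T-δ)..T, b2 s) = ∫ x in τ..(τ+δ), b x := by
      rw [hb2def]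
      rw [intervalIntegral.integral_comp_sub_left b (τ + T)]
      congr 1 <;> ring
    rw [heq]
    exact hb_left δ ⟨hδ0, by linarith⟩
  set κ : ℝ := min K1 K2 with hκdef
  have hκ : 0 < κ := lt_min hK1 hK2
  refine ⟨κ⁻¹ ^ ((1:ℝ)/3), Real.rpow_pos_of_pos (inv_pos.mpr hκ) _, ?_⟩
  intro μ hμ u hu hode t ht
  obtain ⟨ht1, ht2⟩ := ht
  set M : ℝ := max |u τ| |u T| with hMdef
  have hM0 : 0 ≤ M := le_trans (abs_nonneg _) (le_max_left _ _)
  have hτt : τ ≤ t := by linarith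
  have htT : t ≤ T := by linarith
  -- the key estimate
  have key : μ * |u t| ^ 3 * κ ≤ M := by
    rcases eq_or_lt_of_le (abs_nonneg (u t)) with h0 | h0
    · rw [← h0]; simpa using hM0
    have main : ∀ v : ℝ → ℝ, ContDiff ℝ 2 v →
        (∀ s ∈ Icc τ T, deriv (deriv v) s = μ * b s * v s ^ 3) →
        v t = |u t| → |v τ| ≤ M → |v T| ≤ M →
        μ * |u t| ^ 3 * κ ≤ M := by
      intro v hv hodev hvt hvτM hvTM
      have hvt0 : 0 < v t := by rw [hvt]; exact h0
      have hvdiff : Differentiable ℝ v := by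
        have h2 : ContDiff ℝ (1+1) v := by norm_num at hv ⊢; exact hv
        exact (contDiff_succ_iff_deriv.mp h2).1
      have hv2 : ContDiff ℝ (1+1) v := by norm_num at hv ⊢; exact hv
      have hvd2 : Differentiable ℝ (deriv v) :=
        (contDiff_one_iff_deriv.mp (contDiff_succ_iff_deriv.mp hv2).2.2).1
      rcases le_or_gt 0 (deriv v t) with hd | hd
      · -- right case
        have hbit : IntervalIntegrable b volume t T := by
          refine hbi.mono_set ?_
          rw [uIcc_of_le htT, uIcc_of_le hτT.le]
          exact Icc_subset_Icc hτt le_rfl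
        have h := stmt10_aux2 T δ t b hb hbit μ hμ v hv
          (fun s hs => hodev s ⟨hτt.trans hs.1, hs.2⟩) ht2 hδ0 hvt0 hd
        have hκK : κ ≤ K1 := min_le_left _ _
        have : μ * v t ^ 3 * κ ≤ μ * v t ^ 3 * K1 :=
          mul_le_mul_of_nonneg_left hκK (by positivity)
        rw [hvt] at this h
        linarith [h.trans hvTM]
      · -- left case : reflect
        set w : ℝ → ℝ := fun s => v (τ + T - s) with hwdef
        have hwcd : ContDiff ℝ 2 w :=
          hv.comp ((contDiff_const.sub contDiff_id))
        have hinner : ∀ s : ℝ, HasDerivAt (fun x : ℝ => τ + T - x) (-1) s := by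
          intro s
          simpa using (hasDerivAt_id s).const_sub (τ + T)
        have hwderiv : deriv w = fun s => -(deriv v (τ + T - s)) := by
          funext s
          have : HasDerivAt w (deriv v (τ + T - s) * (-1)) s :=
            ((hvdiff (τ + T - s)).hasDerivAt).comp s (hinner s)
          simpa [mul_comm] using this.deriv
        have hwode : ∀ s ∈ Icc τ T, deriv (deriv w) s = μ * b2 s * w s ^ 3 := by
          intro s hs
          have hmem : τ + T - s ∈ Icc τ T := ⟨by linarith [hs.2], by linarith [hs.1]⟩
          have hdd : HasDerivAt (fun x => -(deriv v (τ + T - x)))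
              (-(deriv (deriv v) (τ + T - s) * (-1))) s :=
            (((hvd2 (τ + T - s)).hasDerivAt).comp s (hinner s)).neg
          rw [hwderiv]
          rw [hdd.deriv, hodev _ hmem]
          simp only [hb2def, hwdef]
          ring
        have ht' : τ + T - t ≤ T - δ := by linarith
        have hwt : w (τ + T - t) = v t := by
          simp only [hwdef]; norm_num
        have hwd : 0 ≤ deriv w (τ + T - t) := by
          rw [hwderiv]
          simp only
          have : τ + T - (τ + T - t) = t := by ring
          rw [this]
          linarith
        have hbit2 : IntervalIntegrable b2 volume (τ + T - t) T := by
          refine hbi2.mono_set ?_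
          rw [uIcc_of_le (by linarith : τ + T - t ≤ T), uIcc_of_le hτT.le]
          exact Icc_subset_Icc (by linarith) le_rfl
        have h := stmt10_aux2 T δ (τ + T - t) b2 hb2 hbit2 μ hμ w hwcd
          (fun s hs => hwode s ⟨by linarith [hs.1], hs.2⟩) ht' hδ0
          (by rw [hwt]; exact hvt0) hwd
        have hwT : w T = v τ := by simp only [hwdef]; norm_num
        have hκK : κ ≤ K2 := min_le_right _ _
        have hmul : μ * (w (τ + T - t)) ^ 3 * κ ≤ μ * (w (τ + T - t)) ^ 3 * K2 := by
          refine mul_le_mul_of_nonneg_left hκK ?_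
          rw [hwt, hvt]; positivity
        rw [hwT] at h
        rw [hwt, hvt] at hmul h
        linarith [h.trans hvτM]
    rcases le_or_gt 0 (u t) with hsign | hsign
    · exact main u hu hode (abs_of_nonneg hsign).symm (le_max_left _ _) (le_max_right _ _)
    · refine main (fun s => -u s) hu.neg ?_ ?_ ?_ ?_
      · intro s hs
        have hderivneg : deriv (fun s => -u s) = fun s => -(deriv u s) := by
          funext x; exact deriv.neg
        rw [hderivneg]
        have : deriv (fun x => -(deriv u x)) s = -(deriv (deriv u) s) := deriv.neg
        rw [this, hode s hs]
        ring
      · simp [abs_of_neg hsign]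
      · rw [abs_neg]; exact le_max_left _ _
      · rw [abs_neg]; exact le_max_right _ _
  -- final algebra
  have hκinv : (0:ℝ) ≤ κ⁻¹ := (inv_pos.mpr hκ).le
  have hMμ : (0:ℝ) ≤ M / μ := div_nonneg hM0 hμ.le
  have h3 : |u t| ^ (3:ℕ) ≤ M / μ * κ⁻¹ := by
    rw [div_mul_eq_mul_div, le_div_iff₀ hμ]
    calc |u t| ^ (3:ℕ) * μ = μ * |u t| ^ 3 * κ * κ⁻¹ := by
          field_simp
        _ ≤ M * κ⁻¹ := mul_le_mul_of_nonneg_right key hκinv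
  have habs : |u t| = ((|u t| ^ (3:ℕ) : ℝ)) ^ ((1:ℝ)/3) := by
    rw [← Real.rpow_natCast |u t| 3, ← Real.rpow_mul (abs_nonneg _)]
    norm_num
  calc |u t| = ((|u t| ^ (3:ℕ) : ℝ)) ^ ((1:ℝ)/3) := habs
    _ ≤ (M / μ * κ⁻¹) ^ ((1:ℝ)/3) :=
        Real.rpow_le_rpow (by positivity) h3 (by norm_num)
    _ = (M / μ) ^ ((1:ℝ)/3) * (κ⁻¹) ^ ((1:ℝ)/3) := Real.mul_rpow hMμ hκinv
    _ = κ⁻¹ ^ ((1:ℝ)/3) * (M / μ) ^ ((1:ℝ)/3) := by ring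
end

section
/- Set r = (32 ||a||_{L^∞} τ^3)^{−1/2}. For every ε > 0 small there exists δ_ε > 0 with δ_ε → 0 as ε → 0⁺ such that for any u ∈ H^1(0,τ) with |∫_0^τ ((u')^2 − a u^4)| ≤ ε and |u(0)|, |u(τ)| ≤ ε: if ∫_0^τ (u')^2 ≤ r^2 then ∫_0^τ (u')^2 ≤ δ_ε, while if ∫_0^τ (u')^2 ≥ r^2 then ∫_0^τ (u')^2 ≥ 2 r^2. -/
open Set MeasureTheory

lemma cs_aux (τ : ℝ) (hτ : 0 < τ) (f : ℝ → ℝ) (hf : Continuous f) :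
    (∫ t in (0:ℝ)..τ, |f t|) ≤ Real.sqrt (τ * ∫ t in (0:ℝ)..τ, f t ^ 2) := by
  set E := ∫ t in (0:ℝ)..τ, f t ^ 2 with hE
  set L := ∫ t in (0:ℝ)..τ, |f t| with hL
  have hE0 : 0 ≤ E := intervalIntegral.integral_nonneg hτ.le (fun t _ => sq_nonneg _)
  have hL0 : 0 ≤ L := intervalIntegral.integral_nonneg hτ.le (fun t _ => abs_nonneg _)
  have hLc : ∀ c : ℝ, 0 < c → L ≤ (c * τ + E / c) / 2 := by
    intro c hc
    have hpt : ∀ t ∈ Icc (0:ℝ) τ, |f t| ≤ c / 2 + f t ^ 2 / (2 * c) := by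
      intro t _
      have h3 : |f t| ≤ (c ^ 2 + f t ^ 2) / (2 * c) := by
        rw [le_div_iff₀ (by positivity)]
        nlinarith [sq_nonneg (|f t| - c), sq_abs (f t)]
      have h4 : (c ^ 2 + f t ^ 2) / (2 * c) = c / 2 + f t ^ 2 / (2 * c) := by
        field_simp
      linarith [h4 ▸ h3]
    have hint1 : IntervalIntegrable (fun t => |f t|) volume 0 τ :=
      (hf.abs).intervalIntegrable _ _
    have hint2 : IntervalIntegrable (fun t => c / 2 + f t ^ 2 / (2 * c)) volume 0 τ :=
      (continuous_const.add ((hf.pow 2).div_const _)).intervalIntegrable _ _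
    have := intervalIntegral.integral_mono_on hτ.le hint1 hint2 hpt
    have hcomp : (∫ t in (0:ℝ)..τ, (c / 2 + f t ^ 2 / (2 * c)))
        = c / 2 * τ + E / (2 * c) := by
      rw [intervalIntegral.integral_add (f := fun t => c / 2) (g := fun t => f t ^ 2 / (2 * c)) intervalIntegrable_const (((hf.pow 2).div_const _).intervalIntegrable _ _)]
      simp [intervalIntegral.integral_div, hE]
      ring
    rw [hcomp] at this
    calc L ≤ c / 2 * τ + E / (2 * c) := this
      _ = (c * τ + E / c) / 2 := by field_simp
  rcases eq_or_lt_of_le hE0 with hE0' | hEpos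
  · have : ∀ c : ℝ, 0 < c → L ≤ c * τ / 2 := by
      intro c hc
      have := hLc c hc
      rw [← hE0'] at this
      simpa using this
    have hL0' : L ≤ 0 := by
      by_contra h
      push_neg at h
      have := this (L / τ) (by positivity)
      have hτ' : τ ≠ 0 := hτ.ne'
      rw [div_mul_cancel₀ _ hτ'] at this
      linarith
    have : Real.sqrt (τ * E) ≥ 0 := Real.sqrt_nonneg _
    linarith
  · set c := Real.sqrt (E / τ) with hc
    have hcpos : 0 < c := Real.sqrt_pos.mpr (by positivity)
    have hc2 : c ^ 2 = E / τ := Real.sq_sqrt (by positivity)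
    have hc2' : c ^ 2 * τ = E := by rw [hc2]; field_simp
    have h1 := hLc c hcpos
    -- 2 c L ≤ c^2 τ + E = 2E, so c L ≤ E, so L ≤ E / c and L² ≤ E²/c² = E τ
    have h2 : c * L ≤ E := by
      have : 2 * c * L ≤ c * (c * τ + E / c) := by
        have := mul_le_mul_of_nonneg_left h1 (le_of_lt hcpos)
        nlinarith
      have hexp : c * (c * τ + E / c) = c ^ 2 * τ + E := by field_simp
      rw [hexp, hc2'] at this
      linarith
    have hsq : L ^ 2 ≤ τ * E := by
      nlinarith [mul_le_mul h2 h2 (mul_nonneg hcpos.le hL0) hEpos.le,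
        mul_pos hcpos hcpos, hc2']
    calc L = Real.sqrt (L ^ 2) := (Real.sqrt_sq hL0).symm
      _ ≤ Real.sqrt (τ * E) := Real.sqrt_le_sqrt hsq

lemma key_bound (τ A ε : ℝ) (hτ : 0 < τ) (hA : 0 < A) (hε : 0 < ε)
    (a : ℝ → ℝ) (ha_nonneg : ∀ t, 0 ≤ a t) (ha_bdd : ∀ t, a t ≤ A) (ha_meas : Measurable a)
    (u : ℝ → ℝ) (hu : ContDiff ℝ 1 u)
    (hJ : |∫ t in (0:ℝ)..τ, ((deriv u t) ^ 2 - a t * (u t) ^ 4)| ≤ ε)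
    (h0 : |u 0| ≤ ε) :
    (∫ t in (0:ℝ)..τ, (deriv u t) ^ 2)
      ≤ ε + 8 * A * τ * ε ^ 4 + 8 * A * τ ^ 3 * (∫ t in (0:ℝ)..τ, (deriv u t) ^ 2) ^ 2 := by
  have hf : Continuous (deriv u) := (hu.continuous_deriv le_rfl)
  set E := ∫ t in (0:ℝ)..τ, (deriv u t) ^ 2 with hE
  have hE0 : 0 ≤ E := intervalIntegral.integral_nonneg hτ.le (fun t _ => sq_nonneg _)
  set s := Real.sqrt (τ * E) with hs
  have hs0 : 0 ≤ s := Real.sqrt_nonneg _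
  have hs2 : s ^ 2 = τ * E := Real.sq_sqrt (by positivity)
  set M := ε + s with hM
  have hM0 : 0 ≤ M := by positivity
  -- pointwise bound on u
  have hub : ∀ t ∈ Icc (0:ℝ) τ, |u t| ≤ M := by
    intro t ht
    have hdiff : ∀ x ∈ uIcc (0:ℝ) t, DifferentiableAt ℝ u x :=
      fun x _ => (hu.differentiable one_ne_zero).differentiableAt
    have hftc : ∫ y in (0:ℝ)..t, deriv u y = u t - u 0 :=
      intervalIntegral.integral_deriv_eq_sub hdiff (hf.intervalIntegrable _ _)
    have h1 : |∫ y in (0:ℝ)..t, deriv u y| ≤ ∫ y in (0:ℝ)..t, |deriv u y| := by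
      have ha := intervalIntegral.norm_integral_le_abs_integral_norm
        (f := deriv u) (a := (0:ℝ)) (b := t) (μ := volume)
      have hnn : 0 ≤ ∫ y in (0:ℝ)..t, |deriv u y| :=
        intervalIntegral.integral_nonneg ht.1 (fun y _ => abs_nonneg _)
      simpa [Real.norm_eq_abs, abs_of_nonneg hnn] using ha
    have h2 : (∫ y in (0:ℝ)..t, |deriv u y|) ≤ ∫ y in (0:ℝ)..τ, |deriv u y| := by
      apply intervalIntegral.integral_mono_interval le_rfl ht.1 ht.2
      · filter_upwards with y using abs_nonneg _
      · exact (hf.abs).intervalIntegrable _ _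
    have h3 := cs_aux τ hτ (deriv u) hf
    have : |u t| ≤ |u 0| + |u t - u 0| := by
      have := abs_sub_abs_le_abs_sub (u t) (u 0)
      have h := abs_add_le (u 0) (u t - u 0)
      simpa using h.trans_eq' (by ring_nf)
    calc |u t| ≤ |u 0| + |u t - u 0| := this
      _ ≤ ε + s := by
        rw [← hftc]
        have := h1.trans (h2.trans h3)
        rw [← hE] at this
        linarith
  -- integrability of a * u^4
  have hui : Continuous u := hu.continuous
  have haint : IntervalIntegrable (fun t => a t * u t ^ 4) volume 0 τ := by
    rw [intervalIntegrable_iff_integrableOn_Ioc_of_le hτ.le]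
    apply Integrable.mono' (integrable_const (A * M ^ 4))
    · exact (ha_meas.mul ((hui.pow 4).measurable)).aestronglyMeasurable
    · filter_upwards [ae_restrict_mem measurableSet_Ioc] with t ht
      have ht' : t ∈ Icc (0:ℝ) τ := Ioc_subset_Icc_self ht
      have h1 : u t ^ 4 ≤ M ^ 4 := by
        have : |u t| ^ 4 ≤ M ^ 4 := pow_le_pow_left₀ (abs_nonneg _) (hub t ht') 4
        calc u t ^ 4 = |u t| ^ 4 := by rw [← abs_pow]; simp [abs_of_nonneg (by positivity : (0:ℝ) ≤ u t ^ 4)]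
          _ ≤ M ^ 4 := this
      have h2 : 0 ≤ u t ^ 4 := by positivity
      rw [Real.norm_eq_abs, abs_of_nonneg (mul_nonneg (ha_nonneg t) h2)]
      exact mul_le_mul (ha_bdd t) h1 h2 hA.le
  -- integral bound
  have hIle : (∫ t in (0:ℝ)..τ, a t * u t ^ 4) ≤ τ * (A * M ^ 4) := by
    have hc : (∫ t in (0:ℝ)..τ, (A * M ^ 4 : ℝ)) = τ * (A * M ^ 4) := by
      simp; ring
    rw [← hc]
    apply intervalIntegral.integral_mono_on hτ.le haint (intervalIntegrable_const)
    intro t ht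
    have h1 : u t ^ 4 ≤ M ^ 4 := by
      have : |u t| ^ 4 ≤ M ^ 4 := pow_le_pow_left₀ (abs_nonneg _) (hub t ht) 4
      calc u t ^ 4 = |u t| ^ 4 := by rw [← abs_pow]; simp [abs_of_nonneg (by positivity : (0:ℝ) ≤ u t ^ 4)]
        _ ≤ M ^ 4 := this
    exact mul_le_mul (ha_bdd t) h1 (by positivity) hA.le
  have hsplit : (∫ t in (0:ℝ)..τ, ((deriv u t) ^ 2 - a t * (u t) ^ 4))
      = E - ∫ t in (0:ℝ)..τ, a t * u t ^ 4 := by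
    rw [intervalIntegral.integral_sub (f := fun t => deriv u t ^ 2) (g := fun t => a t * u t ^ 4) ((hf.pow 2).intervalIntegrable _ _) haint]
  rw [hsplit] at hJ
  have hEle : E ≤ ε + τ * (A * M ^ 4) := by
    have := abs_le.mp hJ
    linarith [this.2]
  have hM4 : M ^ 4 ≤ 8 * ε ^ 4 + 8 * s ^ 4 := by
    rw [hM]
    nlinarith [sq_nonneg (ε - s), sq_nonneg (ε + s), sq_nonneg (ε ^ 2 - s ^ 2), mul_nonneg hε.le hs0, mul_nonneg (mul_nonneg hε.le hε.le) (mul_nonneg hs0 hs0)]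
  have hs4 : s ^ 4 = τ ^ 2 * E ^ 2 := by
    have : s ^ 4 = (s ^ 2) ^ 2 := by ring
    rw [this, hs2]; ring
  calc E ≤ ε + τ * (A * M ^ 4) := hEle
    _ ≤ ε + τ * (A * (8 * ε ^ 4 + 8 * s ^ 4)) := by
        have := mul_le_mul_of_nonneg_left hM4 hA.le
        nlinarith [hτ.le]
    _ = ε + 8 * A * τ * ε ^ 4 + 8 * A * τ ^ 3 * E ^ 2 := by rw [hs4]; ring

/-- Nehari-type dichotomy: with `r = (32‖a‖_∞ τ³)^{-1/2}`, for every small `ε > 0` there is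
`δ_ε > 0`, with `δ_ε → 0` as `ε → 0⁺`, such that any `u ∈ H¹(0,τ)` with
`|∫ (u'² - a u⁴)| ≤ ε` and `|u(0)|,|u(τ)| ≤ ε` has energy either `≤ δ_ε` or `≥ 2r²`. -/
theorem stmt11 (τ : ℝ) (hτ : 0 < τ) (a : ℝ → ℝ) (A : ℝ) (hA : 0 < A)
    (ha_nonneg : ∀ t, 0 ≤ a t) (ha_bdd : ∀ t, a t ≤ A) (ha_meas : Measurable a)
    (ha_nontriv : 0 < ∫ t in (0:ℝ)..τ, a t)
    (r : ℝ) (hr : r = (32 * A * τ ^ 3) ^ (-(1:ℝ)/2)) :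
    ∃ ε0 > 0, ∃ δfun : ℝ → ℝ,
      (∀ ε ∈ Ioo 0 ε0, 0 < δfun ε) ∧
      Filter.Tendsto δfun (nhdsWithin 0 (Ioi 0)) (nhds 0) ∧
      ∀ ε ∈ Ioo 0 ε0, ∀ u : ℝ → ℝ, ContDiff ℝ 1 u →
        |∫ t in (0:ℝ)..τ, ((deriv u t) ^ 2 - a t * (u t) ^ 4)| ≤ ε →
        |u 0| ≤ ε → |u τ| ≤ ε →
        ((∫ t in (0:ℝ)..τ, (deriv u t) ^ 2) ≤ r ^ 2 →
            (∫ t in (0:ℝ)..τ, (deriv u t) ^ 2) ≤ δfun ε) ∧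
        (r ^ 2 ≤ (∫ t in (0:ℝ)..τ, (deriv u t) ^ 2) →
            2 * r ^ 2 ≤ ∫ t in (0:ℝ)..τ, (deriv u t) ^ 2) := by
  have hX : (0:ℝ) < 32 * A * τ ^ 3 := by positivity
  have hr2 : r ^ 2 = (32 * A * τ ^ 3)⁻¹ := by
    rw [hr, ← Real.rpow_natCast ((32 * A * τ ^ 3) ^ (-(1:ℝ)/2)) 2,
      ← Real.rpow_mul hX.le]
    norm_num [Real.rpow_neg_one]
  have hr2pos : 0 < r ^ 2 := hr2 ▸ inv_pos.mpr hX
  have h8 : 8 * A * τ ^ 3 * r ^ 2 = 1 / 4 := by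
    rw [hr2]; field_simp; ring
  have h16 : 8 * A * τ ^ 3 * (2 * r ^ 2) = 1 / 2 := by
    rw [hr2]; field_simp; ring
  have h1p : (0:ℝ) < 1 + 8 * A * τ := by positivity
  refine ⟨min 1 (r ^ 2 / (4 * (1 + 8 * A * τ))),
    lt_min one_pos (div_pos hr2pos (by positivity)),
    fun ε => 2 * (ε + 8 * A * τ * ε ^ 4), ?_, ?_, ?_⟩
  · intro ε hε
    have h1 := hε.1
    have h4 : (0:ℝ) ≤ 8 * A * τ * ε ^ 4 := by positivity
    show (0:ℝ) < 2 * (ε + 8 * A * τ * ε ^ 4)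
    linarith
  · have hcont : Continuous (fun ε : ℝ => 2 * (ε + 8 * A * τ * ε ^ 4)) := by fun_prop
    have ht := hcont.tendsto 0
    norm_num at ht
    exact ht.mono_left nhdsWithin_le_nhds
  · intro ε hε u hu hJ hu0 huτ
    have hεlt : ε < r ^ 2 / (4 * (1 + 8 * A * τ)) :=
      lt_of_lt_of_le hε.2 (min_le_right _ _)
    have hε1 : ε ≤ 1 := le_of_lt (lt_of_lt_of_le hε.2 (min_le_left _ _))
    have hε4 : ε ^ 4 ≤ ε := by
      have := pow_le_pow_of_le_one hε.1.le hε1 (show 1 ≤ 4 by norm_num)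
      simpa using this
    set E := ∫ t in (0:ℝ)..τ, (deriv u t) ^ 2 with hE
    have hE0 : 0 ≤ E := intervalIntegral.integral_nonneg hτ.le (fun t _ => sq_nonneg _)
    have key := key_bound τ A ε hτ hA hε.1 a ha_nonneg ha_bdd ha_meas u hu hJ hu0
    rw [← hE] at key
    have hC : 0 ≤ ε + 8 * A * τ * ε ^ 4 := by
      have h4 : (0:ℝ) ≤ 8 * A * τ * ε ^ 4 := by positivity
      linarith [hε.1]
    have hδlt : 2 * (ε + 8 * A * τ * ε ^ 4) < r ^ 2 := by
      have h1 : 2 * (ε + 8 * A * τ * ε ^ 4) ≤ 2 * ε * (1 + 8 * A * τ) := by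
        nlinarith [mul_le_mul_of_nonneg_left hε4 (show (0:ℝ) ≤ 8 * A * τ by positivity)]
      have h2 : 2 * ε * (1 + 8 * A * τ) < r ^ 2 / 2 := by
        have := mul_lt_mul_of_pos_right hεlt (show (0:ℝ) < 2 * (1 + 8 * A * τ) by positivity)
        have heq : r ^ 2 / (4 * (1 + 8 * A * τ)) * (2 * (1 + 8 * A * τ)) = r ^ 2 / 2 := by
          field_simp; ring
        rw [heq] at this
        linarith
      linarith
    constructor
    · intro hle
      have h9 : 8 * A * τ ^ 3 * E ^ 2 ≤ (1 / 4) * E := by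
        have hm := mul_le_mul_of_nonneg_right
          (mul_le_mul_of_nonneg_left hle (show (0:ℝ) ≤ 8 * A * τ ^ 3 by positivity)) hE0
        have h10 : 8 * A * τ ^ 3 * r ^ 2 * E = (1 / 4) * E := by rw [h8]
        nlinarith [hm, h10]
      show E ≤ 2 * (ε + 8 * A * τ * ε ^ 4)
      linarith
    · intro hge
      by_contra h
      push_neg at h
      have h9 : 8 * A * τ ^ 3 * E ^ 2 ≤ (1 / 2) * E := by
        have hle' : E ≤ 2 * r ^ 2 := h.le
        have hm := mul_le_mul_of_nonneg_right
          (mul_le_mul_of_nonneg_left hle' (show (0:ℝ) ≤ 8 * A * τ ^ 3 by positivity)) hE0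
        have h10 : 8 * A * τ ^ 3 * (2 * r ^ 2) * E = (1 / 2) * E := by rw [h16]
        nlinarith [hm, h10]
      linarith
end

section
/- Let u ∈ H^1(0,τ) satisfy |u(0)| ≤ ε, |u(τ)| ≤ ε, and |∫_0^τ ((u')^2 − a u^4)| ≤ ε. Then ∫_0^τ (u')^2 ≤ C_ε + C (∫_0^τ (u')^2)^2, where C_ε = ε + 8 ||a||_{L^∞} τ ε^4 and C = 8 ||a||_{L^∞} τ^3. -/
open Set MeasureTheory

lemma my_cs (t : ℝ) (ht : 0 ≤ t) (f : ℝ → ℝ) (hf : Continuous f) :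
    (∫ s in (0:ℝ)..t, f s) ^ 2 ≤ t * ∫ s in (0:ℝ)..t, (f s) ^ 2 := by
  rcases eq_or_lt_of_le ht with h | h
  · simp [← h]
  set I := ∫ s in (0:ℝ)..t, f s with hI
  set J := ∫ s in (0:ℝ)..t, (f s) ^ 2 with hJ
  have key : 0 ≤ ∫ s in (0:ℝ)..t, (f s - I / t) ^ 2 :=
    intervalIntegral.integral_nonneg (le_of_lt h) (fun s _ => sq_nonneg _)
  have expand : (∫ s in (0:ℝ)..t, (f s - I / t) ^ 2)
      = J - 2 * (I / t) * I + (I / t) ^ 2 * t := by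
    have h1 : IntervalIntegrable (fun s => (f s) ^ 2) volume 0 t := (hf.pow 2).intervalIntegrable _ _
    have h2 : IntervalIntegrable (fun s => 2 * (I / t) * f s) volume 0 t :=
      (continuous_const.mul hf).intervalIntegrable _ _
    have : ∀ s, (f s - I / t) ^ 2 = (f s) ^ 2 - 2 * (I / t) * f s + (I / t) ^ 2 := by
      intro s; ring
    simp_rw [this]
    rw [intervalIntegral.integral_add ((h1.sub h2)) (intervalIntegrable_const),
      intervalIntegral.integral_sub h1 h2, intervalIntegral.integral_const_mul,
      intervalIntegral.integral_const]
    simp; ring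
  rw [expand] at key
  have hd : I / t * t = I := div_mul_cancel₀ I (ne_of_gt h)
  nlinarith [key, h, sq_nonneg (I / t)]

/-- Quadratic self-bound on the energy for functions almost on the Nehari set:
`∫ u'² ≤ C_ε + C (∫ u'²)²` with `C_ε = ε + 8‖a‖_∞ τ ε⁴` and `C = 8‖a‖_∞ τ³`. -/
theorem stmt12 (τ : ℝ) (hτ : 0 < τ) (a : ℝ → ℝ) (A : ℝ) (hA : 0 ≤ A)
    (ha_nonneg : ∀ t, 0 ≤ a t) (ha_bdd : ∀ t, a t ≤ A) (ha_meas : Measurable a)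
    (ε : ℝ) (hε : 0 < ε) (u : ℝ → ℝ) (hu : ContDiff ℝ 1 u)
    (h0 : |u 0| ≤ ε) (hτ' : |u τ| ≤ ε)
    (hN : |∫ t in (0:ℝ)..τ, ((deriv u t) ^ 2 - a t * (u t) ^ 4)| ≤ ε) :
    (∫ t in (0:ℝ)..τ, (deriv u t) ^ 2) ≤
      (ε + 8 * A * τ * ε ^ 4) +
        (8 * A * τ ^ 3) * (∫ t in (0:ℝ)..τ, (deriv u t) ^ 2) ^ 2 := by
  have hu' : Continuous (deriv u) := hu.continuous_deriv le_rfl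
  have huc : Continuous u := hu.continuous
  set E := ∫ t in (0:ℝ)..τ, (deriv u t) ^ 2 with hE
  have hE0 : 0 ≤ E :=
    intervalIntegral.integral_nonneg (le_of_lt hτ) (fun s _ => sq_nonneg _)
  have hEint : IntervalIntegrable (fun t => (deriv u t) ^ 2) volume 0 τ :=
    (hu'.pow 2).intervalIntegrable _ _
  set M := ε + Real.sqrt τ * Real.sqrt E with hM
  have hM0 : 0 ≤ M := by positivity
  -- pointwise bound |u t| ≤ M on [0, τ]
  have hbound : ∀ t ∈ Icc (0:ℝ) τ, |u t| ≤ M := by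
    intro t ht
    have hftc : ∫ s in (0:ℝ)..t, deriv u s = u t - u 0 := by
      apply intervalIntegral.integral_deriv_eq_sub
      · intro x _; exact (hu.differentiable one_ne_zero).differentiableAt
      · exact hu'.intervalIntegrable _ _
    have hcs : (∫ s in (0:ℝ)..t, deriv u s) ^ 2 ≤ t * ∫ s in (0:ℝ)..t, (deriv u s) ^ 2 :=
      my_cs t ht.1 _ hu'
    have hmono : (∫ s in (0:ℝ)..t, (deriv u s) ^ 2) ≤ E := by
      apply intervalIntegral.integral_mono_interval le_rfl ht.1 ht.2 _ hEint
      filter_upwards with s using sq_nonneg _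
    have hle : (∫ s in (0:ℝ)..t, deriv u s) ^ 2 ≤ τ * E := by
      calc (∫ s in (0:ℝ)..t, deriv u s) ^ 2 ≤ t * ∫ s in (0:ℝ)..t, (deriv u s) ^ 2 := hcs
        _ ≤ τ * E := by
            have h1 : (0:ℝ) ≤ ∫ s in (0:ℝ)..t, (deriv u s) ^ 2 :=
              intervalIntegral.integral_nonneg ht.1 (fun s _ => sq_nonneg _)
            nlinarith [ht.2, ht.1, hmono]
    have habs : |∫ s in (0:ℝ)..t, deriv u s| ≤ Real.sqrt τ * Real.sqrt E := by
      rw [← Real.sqrt_mul (le_of_lt hτ)]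
      exact Real.abs_le_sqrt hle
    calc |u t| = |u 0 + (u t - u 0)| := by ring_nf
      _ ≤ |u 0| + |u t - u 0| := abs_add_le _ _
      _ ≤ ε + Real.sqrt τ * Real.sqrt E := by rw [← hftc]; exact add_le_add h0 habs
  -- integrability of a * u^4
  have haint : IntervalIntegrable (fun t => a t * (u t) ^ 4) volume 0 τ := by
    rw [intervalIntegrable_iff, uIoc_of_le (le_of_lt hτ)]
    refine Measure.integrableOn_of_bounded (μ := volume) (M := A * M ^ 4) ?_ ?_ ?_
    · exact (measure_Ioc_lt_top).ne
    · exact (ha_meas.mul ((huc.pow 4).measurable)).aestronglyMeasurable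
    · filter_upwards [ae_restrict_mem measurableSet_Ioc] with t ht
      have h1 : |u t| ≤ M := hbound t ⟨le_of_lt ht.1, ht.2⟩
      rw [Real.norm_eq_abs, abs_mul, abs_of_nonneg (ha_nonneg t), abs_pow]
      exact mul_le_mul (ha_bdd t) (pow_le_pow_left₀ (abs_nonneg _) h1 4) (by positivity) hA
  -- split the Nehari integral
  have hsub : (∫ t in (0:ℝ)..τ, ((deriv u t) ^ 2 - a t * (u t) ^ 4))
      = E - ∫ t in (0:ℝ)..τ, a t * (u t) ^ 4 := intervalIntegral.integral_sub hEint haint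
  -- bound ∫ a u⁴
  have hup : (∫ t in (0:ℝ)..τ, a t * (u t) ^ 4) ≤ A * M ^ 4 * τ := by
    have : (∫ t in (0:ℝ)..τ, a t * (u t) ^ 4) ≤ ∫ _t in (0:ℝ)..τ, A * M ^ 4 := by
      apply intervalIntegral.integral_mono_on (le_of_lt hτ) haint intervalIntegrable_const
      intro t ht
      have h1 : |u t| ≤ M := hbound t ht
      have h2 : (u t) ^ 4 ≤ M ^ 4 := by
        calc (u t) ^ 4 = |u t| ^ 4 := by rw [← abs_pow, abs_of_nonneg (by positivity)]
          _ ≤ M ^ 4 := pow_le_pow_left₀ (abs_nonneg _) h1 4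
      have h40 : (0:ℝ) ≤ (u t) ^ 4 := by positivity
      nlinarith [mul_le_mul (ha_bdd t) h2 h40 hA]
    simpa using this.trans (by simp [intervalIntegral.integral_const]; ring_nf; rfl)
  have hEle : E ≤ ε + A * M ^ 4 * τ := by
    have h2 := (abs_le.mp hN).2
    rw [hsub] at h2
    linarith
  -- final arithmetic
  have hb4 : (Real.sqrt τ * Real.sqrt E) ^ 4 = τ ^ 2 * E ^ 2 := by
    rw [mul_pow]
    rw [show (4:ℕ) = 2 * 2 from rfl, pow_mul, pow_mul,
      Real.sq_sqrt hτ.le, Real.sq_sqrt hE0]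
  have hb0 : 0 ≤ Real.sqrt τ * Real.sqrt E := by positivity
  have hM4 : M ^ 4 ≤ 8 * ε ^ 4 + 8 * τ ^ 2 * E ^ 2 := by
    set b := Real.sqrt τ * Real.sqrt E
    have : M ^ 4 ≤ 8 * (ε ^ 4 + b ^ 4) := by
      rw [hM]
      nlinarith [sq_nonneg (ε - b), sq_nonneg (ε + b), sq_nonneg (ε ^ 2 - b ^ 2), hε.le, hb0]
    linarith [this, hb4 ▸ this]
  have hfin : A * M ^ 4 * τ ≤ 8 * A * τ * ε ^ 4 + 8 * A * τ ^ 3 * E ^ 2 := by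
    nlinarith [mul_le_mul_of_nonneg_left hM4 (mul_nonneg hA hτ.le), hτ.le]
  linarith
end

section
/- Let w ∈ H^1_0(s1,s2) satisfy ∫_{s1}^{s2} (w')^2 ≤ κ ∫_{s1}^{s2} (w')^2 with κ = ε² (s2−s1)² Q < 1 arising from ∫ (w')² ≤ ∫ p(t) w² with 0 ≤ p ≤ ε² Q a.e. Then w ≡ 0. Consequently, if u₁, u₂ solve u'' + a_μ(t) u³ = 0 on [s1,s2] with the same boundary values, ||u_i||_{L^∞([0,τ]∩[s1,s2])} ≤ ε, and a_μ ≤ 0 outside [0,τ], 0 ≤ a_μ ≤ Q on [0,τ], with 3ε²(s2−s1)²Q < 1, then u₁ ≡ u₂. -/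
open Set MeasureTheory


lemma key_max (s1 s2 c : ℝ) (hs : s1 < s2) (hc : 0 < c) (hsmall : c * (s2 - s1) ^ 2 < 1)
    (w : ℝ → ℝ) (hw : ContDiff ℝ 2 w) (h1 : w s1 = 0) (h2 : w s2 = 0)
    (hineq : ∀ t ∈ Icc s1 s2, 0 < w t → -(c * w t) ≤ deriv (deriv w) t) :
    ∀ t ∈ Icc s1 s2, w t ≤ 0 := by
  by_contra hcon
  push_neg at hcon
  obtain ⟨t1, ht1mem, ht1⟩ := hcon
  have hwc : Continuous w := hw.continuous
  have hwd : Differentiable ℝ w := hw.differentiable two_ne_zero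
  have hdw : ContDiff ℝ 1 (deriv w) := by
    rw [show (2 : WithTop ℕ∞) = 1 + 1 from rfl, contDiff_succ_iff_deriv] at hw
    exact hw.2.2
  have hdwd : Differentiable ℝ (deriv w) := hdw.differentiable one_ne_zero
  obtain ⟨t0, ht0mem, hmax⟩ := isCompact_Icc.exists_isMaxOn (nonempty_Icc.2 hs.le)
    hwc.continuousOn
  set M := w t0 with hMdef
  have hM : 0 < M := lt_of_lt_of_le ht1 (hmax ht1mem)
  have ht0i : t0 ∈ Ioo s1 s2 := by
    rcases ht0mem with ⟨ha, hb⟩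
    constructor
    · rcases lt_or_eq_of_le ha with h | h
      · exact h
      · exact absurd (h ▸ h1 : w t0 = 0) (by linarith)
    · rcases lt_or_eq_of_le hb with h | h
      · exact h
      · exact absurd (h ▸ h2 : w t0 = 0) (by linarith)
  have hd0 : deriv w t0 = 0 :=
    (hmax.isLocalMax (Icc_mem_nhds ht0i.1 ht0i.2)).deriv_eq_zero
  -- α : last zero before t0
  set S : Set ℝ := {t ∈ Icc s1 t0 | w t ≤ 0} with hSdef
  have hSne : S.Nonempty := ⟨s1, ⟨⟨le_rfl, ht0mem.1⟩, h1.le⟩⟩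
  have hSbdd : BddAbove S := ⟨t0, fun x hx => hx.1.2⟩
  have hSclosed : IsClosed S :=
    (isClosed_Icc.inter (isClosed_le hwc continuous_const) : IsClosed (Icc s1 t0 ∩ {t | w t ≤ 0}))
  set α := sSup S with hαdef
  have hαmem : α ∈ S := hSclosed.csSup_mem hSne hSbdd
  have hαw : w α ≤ 0 := hαmem.2
  have hαs1 : s1 ≤ α := hαmem.1.1
  have hαt0 : α < t0 := lt_of_le_of_ne hαmem.1.2 (fun h => by rw [h] at hαw; linarith)
  have hpos : ∀ t ∈ Ioo α t0, 0 < w t := by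
    intro t ht
    by_contra hneg
    push_neg at hneg
    have : t ∈ S := ⟨⟨hαs1.trans ht.1.le, ht.2.le⟩, hneg⟩
    exact absurd (le_csSup hSbdd this) (not_le.2 ht.1)
  have hIccsub : Icc α t0 ⊆ Icc s1 s2 := Icc_subset_Icc hαs1 ht0i.2.le
  have hIoosub : Ioo α t0 ⊆ Icc s1 s2 := fun t ht => hIccsub ⟨ht.1.le, ht.2.le⟩
  -- φ = deriv w + c M t is monotone on [α, t0]
  have hφmono : MonotoneOn (fun t => deriv w t + c * M * t) (Icc α t0) := by
    apply monotoneOn_of_deriv_nonneg (convex_Icc α t0)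
      (hdwd.continuous.continuousOn.add (by fun_prop))
      (by fun_prop)
    intro t ht
    rw [interior_Icc] at ht
    have hder : HasDerivAt (fun t => deriv w t + c * M * t)
        (deriv (deriv w) t + c * M) t := by
      exact (((hdwd t).hasDerivAt).add ((hasDerivAt_id t).const_mul (c*M))).congr_deriv (by ring)
    show 0 ≤ deriv (fun t => deriv w t + c * M * t) t
    rw [hder.deriv]
    have h1 := hineq t (hIoosub ht) (hpos t ht)
    have h2 : w t ≤ M := hmax (hIoosub ht)
    nlinarith [hpos t ht]
  -- χ = w + c M (t0 - t)^2/2 is antitone on [α, t0]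
  have hχanti : AntitoneOn (fun t => w t + c * M * ((t0 - t) ^ 2 / 2)) (Icc α t0) := by
    apply antitoneOn_of_deriv_nonpos (convex_Icc α t0)
      (hwc.continuousOn.add (by fun_prop))
      ((hwd.differentiableOn).add (by fun_prop))
    intro t ht
    rw [interior_Icc] at ht
    have hg : HasDerivAt (fun t => c * M * ((t0 - t) ^ 2 / 2)) (c * M * (t - t0)) t := by
      have : HasDerivAt (fun t : ℝ => (t0 - t) ^ 2 / 2) (t - t0) t := by
        have h := (((hasDerivAt_id t).const_sub t0).pow 2).div_const 2
        norm_num at h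
        refine h.congr_deriv ?_
        ring
      simpa using this.const_mul (c * M)
    have hder : HasDerivAt (fun t => w t + c * M * ((t0 - t) ^ 2 / 2))
        (deriv w t + c * M * (t - t0)) t := ((hwd t).hasDerivAt).add hg
    show deriv (fun t => w t + c * M * ((t0 - t) ^ 2 / 2)) t ≤ 0
    rw [hder.deriv]
    have := hφmono ⟨ht.1.le, ht.2.le⟩ (right_mem_Icc.2 (le_of_lt hαt0)) ht.2.le
    simp only [hd0, zero_add] at this
    nlinarith
  have hfinal := hχanti (left_mem_Icc.2 hαt0.le) (right_mem_Icc.2 hαt0.le) hαt0.le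
  simp only [sub_self, ne_eq, OfNat.ofNat_ne_zero, not_false_eq_true, zero_pow,
    zero_div, mul_zero, add_zero] at hfinal
  -- hfinal : M ≤ w α + c * M * ((t0 - α)^2/2)
  have hlen : t0 - α ≤ s2 - s1 := by
    have := ht0i.2.le; linarith
  rw [← hMdef] at hfinal
  have h0 : 0 ≤ t0 - α := by linarith
  have hsq : (t0 - α) ^ 2 ≤ (s2 - s1) ^ 2 := by nlinarith
  nlinarith [mul_nonneg (mul_pos hc hM).le (sub_nonneg.2 hsq),
    mul_pos hM (sub_pos.2 hsmall)]

lemma part_one (s1 s2 : ℝ) (hs : s1 < s2) (w : ℝ → ℝ) (hw : ContDiff ℝ 1 w)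
    (h1 : w s1 = 0) (h2 : w s2 = 0) (κ : ℝ) (hκ0 : 0 ≤ κ) (hκ1 : κ < 1)
    (hint : (∫ t in s1..s2, (deriv w t) ^ 2) ≤ κ * (∫ t in s1..s2, (deriv w t) ^ 2)) :
    ∀ t ∈ Icc s1 s2, w t = 0 := by
  have hwd : Differentiable ℝ w := hw.differentiable one_ne_zero
  have hdc : Continuous (deriv w) := (contDiff_one_iff_deriv.1 hw).2
  set f : ℝ → ℝ := fun t => (deriv w t) ^ 2 with hf
  have hfc : Continuous f := by fun_prop
  have hfnn : ∀ x, 0 ≤ f x := fun x => sq_nonneg _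
  have hI0 : (∫ t in s1..s2, f t) = 0 := by
    have hnn : 0 ≤ ∫ t in s1..s2, f t :=
      intervalIntegral.integral_nonneg hs.le fun x _ => hfnn x
    nlinarith
  set F : ℝ → ℝ := fun x => ∫ t in s1..x, f t with hF
  have hF0 : ∀ t ∈ Icc s1 s2, F t = 0 := by
    intro t ht
    have hnn : 0 ≤ F t := intervalIntegral.integral_nonneg ht.1 fun x _ => hfnn x
    have hadd : F t + (∫ u in t..s2, f u) = ∫ u in s1..s2, f u :=
      intervalIntegral.integral_add_adjacent_intervals
        (hfc.intervalIntegrable s1 t) (hfc.intervalIntegrable t s2)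
    have h2nn : 0 ≤ ∫ u in t..s2, f u :=
      intervalIntegral.integral_nonneg ht.2 fun x _ => hfnn x
    rw [hI0] at hadd
    linarith
  have hderiv0 : ∀ t ∈ Ioo s1 s2, deriv w t = 0 := by
    intro t ht
    have hFD : HasDerivAt F (f t) t :=
      intervalIntegral.integral_hasDerivAt_right (hfc.intervalIntegrable s1 t)
        hfc.stronglyMeasurable.stronglyMeasurableAtFilter hfc.continuousAt
    have heq : F =ᶠ[nhds t] fun _ => (0 : ℝ) :=
      Filter.eventuallyEq_of_mem (Icc_mem_nhds ht.1 ht.2) hF0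
    have hFD0 : HasDerivAt F 0 t := (hasDerivAt_const t (0:ℝ)).congr_of_eventuallyEq heq
    have : f t = 0 := hFD.unique hFD0
    exact pow_eq_zero_iff (by norm_num) |>.1 this
  have hmono : MonotoneOn w (Icc s1 s2) := by
    apply monotoneOn_of_deriv_nonneg (convex_Icc s1 s2) hwd.continuous.continuousOn
      hwd.differentiableOn
    intro x hx
    rw [interior_Icc] at hx
    rw [hderiv0 x hx]
  have hanti : AntitoneOn w (Icc s1 s2) := by
    apply antitoneOn_of_deriv_nonpos (convex_Icc s1 s2) hwd.continuous.continuousOn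
      hwd.differentiableOn
    intro x hx
    rw [interior_Icc] at hx
    rw [hderiv0 x hx]
  intro t ht
  have hl := hmono (left_mem_Icc.2 hs.le) ht ht.1
  have hr := hanti (left_mem_Icc.2 hs.le) ht ht.1
  rw [h1] at hl hr
  linarith

lemma aux_half (s1 s2 τ : ℝ) (hs : s1 < s2)
    (aμ : ℝ → ℝ) (Q : ℝ) (hQ : 0 < Q)
    (haμ_neg : ∀ t, t ∉ Icc 0 τ → aμ t ≤ 0)
    (haμ_pos : ∀ t ∈ Icc 0 τ, 0 ≤ aμ t ∧ aμ t ≤ Q)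
    (ε : ℝ) (hε : 0 < ε) (hsmall : 3 * ε ^ 2 * (s2 - s1) ^ 2 * Q < 1)
    (u₁ u₂ : ℝ → ℝ) (hu₁ : ContDiff ℝ 2 u₁) (hu₂ : ContDiff ℝ 2 u₂)
    (heq₁ : ∀ t ∈ Icc s1 s2, deriv (deriv u₁) t + aμ t * (u₁ t) ^ 3 = 0)
    (heq₂ : ∀ t ∈ Icc s1 s2, deriv (deriv u₂) t + aμ t * (u₂ t) ^ 3 = 0)
    (hbc1 : u₁ s1 = u₂ s1) (hbc2 : u₁ s2 = u₂ s2)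
    (hsm₁ : ∀ t ∈ Icc 0 τ, |u₁ t| ≤ ε) (hsm₂ : ∀ t ∈ Icc 0 τ, |u₂ t| ≤ ε) :
    ∀ t ∈ Icc s1 s2, u₂ t - u₁ t ≤ 0 := by
  have hd₁ : Differentiable ℝ u₁ := hu₁.differentiable two_ne_zero
  have hd₂ : Differentiable ℝ u₂ := hu₂.differentiable two_ne_zero
  have hdd₁ : Differentiable ℝ (deriv u₁) := by
    rw [show (2 : WithTop ℕ∞) = 1 + 1 from rfl, contDiff_succ_iff_deriv] at hu₁
    exact hu₁.2.2.differentiable one_ne_zero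
  have hdd₂ : Differentiable ℝ (deriv u₂) := by
    rw [show (2 : WithTop ℕ∞) = 1 + 1 from rfl, contDiff_succ_iff_deriv] at hu₂
    exact hu₂.2.2.differentiable one_ne_zero
  apply key_max s1 s2 (3 * ε ^ 2 * Q) hs (by positivity)
    (by rw [show 3 * ε ^ 2 * Q * (s2 - s1) ^ 2 = 3 * ε ^ 2 * (s2 - s1) ^ 2 * Q from by ring]
        exact hsmall)
    (fun t => u₂ t - u₁ t) (hu₂.sub hu₁) (by simp [hbc1]) (by simp [hbc2])
  intro t ht hpos
  have hdw : deriv (fun t => u₂ t - u₁ t) = fun t => deriv u₂ t - deriv u₁ t :=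
    funext fun x => deriv_sub (hd₂ x) (hd₁ x)
  have hd2 : deriv (deriv fun t => u₂ t - u₁ t) t
      = deriv (deriv u₂) t - deriv (deriv u₁) t := by
    rw [hdw]
    exact deriv_sub (hdd₂ t) (hdd₁ t)
  rw [hd2]
  have he1 := heq₁ t ht
  have he2 := heq₂ t ht
  have hq0 : 0 ≤ (u₂ t) ^ 2 + u₁ t * u₂ t + (u₁ t) ^ 2 := by nlinarith [sq_nonneg (u₁ t + u₂ t)]
  by_cases htτ : t ∈ Icc (0:ℝ) τ
  · obtain ⟨ha0, haQ⟩ := haμ_pos t htτ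
    have e1 := abs_le.1 (hsm₁ t htτ)
    have e2 := abs_le.1 (hsm₂ t htτ)
    have hab : u₁ t * u₂ t ≤ ε ^ 2 := by nlinarith
    have ha2 : (u₁ t) ^ 2 ≤ ε ^ 2 := by nlinarith
    have hb2 : (u₂ t) ^ 2 ≤ ε ^ 2 := by nlinarith
    have hq : (u₂ t) ^ 2 + u₁ t * u₂ t + (u₁ t) ^ 2 ≤ 3 * ε ^ 2 := by linarith
    nlinarith [mul_nonneg (mul_nonneg (sub_nonneg.2 haQ) hpos.le) hq0,
      mul_nonneg (mul_nonneg hQ.le hpos.le) (sub_nonneg.2 hq)]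
  · have haneg := haμ_neg t htτ
    nlinarith [mul_nonneg (mul_nonneg hq0 hpos.le) (neg_nonneg.2 haneg),
      mul_pos (show (0:ℝ) < 3 * ε ^ 2 * Q by positivity) hpos]
/-- (i) If `w ∈ H¹₀(s₁,s₂)` satisfies `∫ w'² ≤ κ ∫ w'²` with `0 ≤ κ < 1`, then `w ≡ 0`
on `[s₁,s₂]`.  (ii) Consequently, two solutions of `u'' + a_μ u³ = 0` on `[s₁,s₂]` with
the same boundary values, small on `[0,τ]`, coincide (with `a_μ ≤ 0` outside `[0,τ]`,
`0 ≤ a_μ ≤ Q` on `[0,τ]`, and `3ε²(s₂-s₁)²Q < 1`). -/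
theorem stmt19 (s1 s2 τ : ℝ) (hs : s1 < s2) (hτ : 0 < τ)
    (hsub : Icc (0:ℝ) τ ⊆ Icc s1 s2)
    (aμ : ℝ → ℝ) (Q : ℝ) (hQ : 0 < Q) (haμ_meas : Measurable aμ)
    (haμ_neg : ∀ t, t ∉ Icc 0 τ → aμ t ≤ 0)
    (haμ_pos : ∀ t ∈ Icc 0 τ, 0 ≤ aμ t ∧ aμ t ≤ Q)
    (ε : ℝ) (hε : 0 < ε) (hsmall : 3 * ε ^ 2 * (s2 - s1) ^ 2 * Q < 1)
    (u₁ u₂ : ℝ → ℝ) (hu₁ : ContDiff ℝ 2 u₁) (hu₂ : ContDiff ℝ 2 u₂)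
    (heq₁ : ∀ t ∈ Icc s1 s2, deriv (deriv u₁) t + aμ t * (u₁ t) ^ 3 = 0)
    (heq₂ : ∀ t ∈ Icc s1 s2, deriv (deriv u₂) t + aμ t * (u₂ t) ^ 3 = 0)
    (hbc : u₁ s1 = u₂ s1 ∧ u₁ s2 = u₂ s2)
    (hsm₁ : ∀ t ∈ Icc 0 τ, |u₁ t| ≤ ε) (hsm₂ : ∀ t ∈ Icc 0 τ, |u₂ t| ≤ ε) :
    (∀ w : ℝ → ℝ, ContDiff ℝ 1 w → w s1 = 0 → w s2 = 0 →
      ∀ κ : ℝ, 0 ≤ κ → κ < 1 →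
      (∫ t in s1..s2, (deriv w t) ^ 2) ≤ κ * (∫ t in s1..s2, (deriv w t) ^ 2) →
      ∀ t ∈ Icc s1 s2, w t = 0) ∧
    (∀ t ∈ Icc s1 s2, u₁ t = u₂ t) := by
  constructor
  · exact fun w hw h1 h2 κ hκ0 hκ1 hint => part_one s1 s2 hs w hw h1 h2 κ hκ0 hκ1 hint
  · intro t ht
    have hA := aux_half s1 s2 τ hs aμ Q hQ haμ_neg haμ_pos ε hε hsmall u₁ u₂ hu₁ hu₂
      heq₁ heq₂ hbc.1 hbc.2 hsm₁ hsm₂ t ht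
    have hB := aux_half s1 s2 τ hs aμ Q hQ haμ_neg haμ_pos ε hε hsmall u₂ u₁ hu₂ hu₁
      heq₂ heq₁ hbc.1.symm hbc.2.symm hsm₂ hsm₁ t ht
    linarith
end
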